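/- arXiv:1810.06288 — 12 statements merged into one kernel-verified Lean document; each statement's English description precedes it below -/
import Mathlib

section
/- There is no Clifford system of 7 elements on the Euclidean space ℝ^8; that is, there do not exist seven self-adjoint linear endomorphisms P_0, …, P_6 of EuclideanSpace ℝ (Fin 8) with P_α ∘ P_α = Id for every α and P_α ∘ P_β = −P_β ∘ P_α whenever α ≠ β. -/
/-!
The `2 ^ 7` ordered products `P_S = ∏_{i ∈ S} P i`, `S ⊆ {0, …, 6}`, are linearly independent in
`End ℝ⁸`, which has dimension `64`. Indeed `P_S P_T = ± P_{S ∆ T}`, and `tr P_U = 0` for `U ≠ ∅`: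
if `|U|` is even, `P_U` anticommutes with its first factor; if `|U|` is odd and some `P a` is not a
factor, `P a` anticommutes with `P_U`; and `P_{0…6}` is skew-adjoint, since reversing seven
anticommuting factors costs the sign `(-1) ^ 21`. So the trace form `tr (X Y)` is diagonal on the
`P_S`, with entries `± 8`.
-/

open scoped RealInnerProductSpace symmDiff

section Anticommuting

variable {R ι : Type*} [Ring R] {P : ι → R}

def PairwiseAnticommute (P : ι → R) : Prop :=
  Pairwise fun i j => P i * P j = -(P j * P i)

theorem PairwiseAnticommute.prod_map_mul (hP : PairwiseAnticommute P)
    {a : ι} {l : List ι} (ha : a ∉ l) :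
    (l.map P).prod * P a = (-1 : ℤ) ^ l.length • (P a * (l.map P).prod) := by
  induction l with
  | nil => simp
  | cons b l ih =>
    rw [List.mem_cons, not_or] at ha
    simp only [List.map_cons, List.prod_cons, List.length_cons, mul_assoc, ih ha.2,
      mul_smul_comm, ← mul_assoc (P b), hP (Ne.symm ha.1), pow_succ, mul_neg_one, neg_smul,
      neg_mul, smul_neg]

theorem PairwiseAnticommute.prod_map_reverse (hP : PairwiseAnticommute P)
    {l : List ι} (hl : l.Nodup) :
    (l.reverse.map P).prod = (-1 : ℤ) ^ l.length.choose 2 • (l.map P).prod := by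
  induction l with
  | nil => simp
  | cons a l ih =>
    rw [List.nodup_cons] at hl
    simp only [List.reverse_cons, List.map_append, List.prod_append, List.map_cons,
      List.map_nil, List.prod_cons, List.prod_nil, mul_one, ih hl.2, smul_mul_assoc,
      hP.prod_map_mul hl.1, smul_smul, ← pow_add, List.length_cons,
      Nat.choose_succ_succ', Nat.choose_one_right, add_comm]

variable [DecidableEq ι]

def cliffordMonomial (P : ι → R) (l : List ι) (S : Finset ι) : R :=
  ((l.filter (· ∈ S)).map P).prod

@[simp]
theorem cliffordMonomial_empty (P : ι → R) (l : List ι) : cliffordMonomial P l ∅ = 1 := by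
  simp [cliffordMonomial]

theorem cliffordMonomial_cons (P : ι → R) (a : ι) (l : List ι) (S : Finset ι) :
    cliffordMonomial P (a :: l) S = (if a ∈ S then P a else 1) * cliffordMonomial P l S := by
  unfold cliffordMonomial
  split_ifs with ha <;> simp [ha]

theorem PairwiseAnticommute.cliffordMonomial_mul_comm (hP : PairwiseAnticommute P)
    {a : ι} {l : List ι} (ha : a ∉ l) (S T : Finset ι) :
    ∃ k : ℕ, cliffordMonomial P l S * (if a ∈ T then P a else 1) =
      (-1 : ℤ) ^ k • ((if a ∈ T then P a else 1) * cliffordMonomial P l S) := by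
  split_ifs
  · exact ⟨_, hP.prod_map_mul fun h => ha (List.mem_of_mem_filter h)⟩
  · exact ⟨0, by simp⟩

theorem PairwiseAnticommute.cliffordMonomial_mul (hP : PairwiseAnticommute P)
    (hsq : ∀ i, P i * P i = 1) {l : List ι} (hl : l.Nodup) (S T : Finset ι) :
    ∃ k : ℕ, cliffordMonomial P l S * cliffordMonomial P l T =
      (-1 : ℤ) ^ k • cliffordMonomial P l (S ∆ T) := by
  induction l with
  | nil => exact ⟨0, by simp [cliffordMonomial]⟩
  | cons a l ih =>
    rw [List.nodup_cons] at hl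
    obtain ⟨j, hj⟩ := hP.cliffordMonomial_mul_comm hl.1 S T
    obtain ⟨k, hk⟩ := ih hl.2
    have hfactor : (if a ∈ S then P a else 1) * (if a ∈ T then P a else 1) =
        if a ∈ S ∆ T then P a else 1 := by
      by_cases haS : a ∈ S <;> by_cases haT : a ∈ T <;>
        simp [haS, haT, hsq, Finset.mem_symmDiff]
    refine ⟨j + k, ?_⟩
    calc cliffordMonomial P (a :: l) S * cliffordMonomial P (a :: l) T
        = (if a ∈ S then P a else 1) * (cliffordMonomial P l S * (if a ∈ T then P a else 1)) *
            cliffordMonomial P l T := by simp only [cliffordMonomial_cons, mul_assoc]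
      _ = (-1 : ℤ) ^ (j + k) • cliffordMonomial P (a :: l) (S ∆ T) := by
        rw [hj, cliffordMonomial_cons, ← hfactor, pow_add, mul_smul]
        simp only [mul_smul_comm, smul_mul_assoc, mul_assoc, hk]

end Anticommuting

theorem star_prod_map_of_isSelfAdjoint {R ι : Type*} [Monoid R] [StarMul R] {P : ι → R}
    (hP : ∀ i, IsSelfAdjoint (P i)) (l : List ι) :
    star (l.map P).prod = (l.reverse.map P).prod := by
  induction l with
  | nil => simp
  | cons a l ih => simp [star_mul, ih, (hP a).star_eq]

structure IsCliffordSystem {R ι : Type*} [Ring R] [Star R] (P : ι → R) : Prop where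
  isSelfAdjoint : ∀ i, IsSelfAdjoint (P i)
  mul_self : ∀ i, P i * P i = 1
  anticommute : PairwiseAnticommute P

namespace LinearMap

variable {R M : Type*} [CommRing R] [IsAddTorsionFree R] [AddCommGroup M] [Module R M]

theorem trace_mul_eq_zero_of_anticomm {u x : Module.End R M} (h : x * u = -(u * x)) :
    trace R M (u * x) = 0 := by
  rw [← self_eq_neg, ← map_neg, ← h, trace_mul_comm]

theorem trace_eq_zero_of_anticomm_involution {u x : Module.End R M} (hu : u * u = 1)
    (h : x * u = -(u * x)) : trace R M x = 0 := by
  have h' : u * x = -(x * u) := by rw [h, neg_neg]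
  calc trace R M x = trace R M (x * u * u) := by rw [mul_assoc, hu, mul_one]
    _ = trace R M (u * (x * u)) := trace_mul_comm R _ _
    _ = 0 := trace_mul_eq_zero_of_anticomm <| by
      rw [mul_assoc, hu, mul_one, ← mul_assoc, h', neg_mul, mul_assoc, hu, mul_one, neg_neg]

theorem trace_adjoint {𝕜 E : Type*} [RCLike 𝕜] [NormedAddCommGroup E] [InnerProductSpace 𝕜 E]
    [FiniteDimensional 𝕜 E] (T : E →ₗ[𝕜] E) :
    trace 𝕜 E (adjoint T) = starRingEnd 𝕜 (trace 𝕜 E T) := by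
  let b := stdOrthonormalBasis 𝕜 E
  rw [trace_eq_matrix_trace 𝕜 b.toBasis, trace_eq_matrix_trace 𝕜 b.toBasis, toMatrix_adjoint,
    Matrix.trace_conjTranspose, starRingEnd_apply]

theorem trace_eq_zero_of_star_eq_neg {E : Type*} [NormedAddCommGroup E] [InnerProductSpace ℝ E]
    [FiniteDimensional ℝ E] {T : E →ₗ[ℝ] E} (hT : star T = -T) : trace ℝ E T = 0 := by
  have := trace_adjoint T
  rwa [← star_eq_adjoint, hT, map_neg, RCLike.conj_to_real, neg_eq_self] at this

end LinearMap

open LinearMap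

section Trace

variable {ι R M : Type*} [CommRing R] [IsAddTorsionFree R] [AddCommGroup M] [Module R M]
  {P : ι → Module.End R M}

theorem PairwiseAnticommute.trace_mul_prod_map_eq_zero (hP : PairwiseAnticommute P) {a : ι}
    {l : List ι} (ha : a ∉ l) (hl : Odd l.length) :
    trace R M (P a * (l.map P).prod) = 0 :=
  trace_mul_eq_zero_of_anticomm <| by rw [hP.prod_map_mul ha, hl.neg_one_pow, neg_one_smul]

theorem PairwiseAnticommute.trace_prod_map_eq_zero_of_not_mem (hP : PairwiseAnticommute P)
    {a : ι} (hsq : P a * P a = 1) {l : List ι} (ha : a ∉ l) (hl : Odd l.length) :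
    trace R M (l.map P).prod = 0 :=
  trace_eq_zero_of_anticomm_involution hsq <| by
    rw [hP.prod_map_mul ha, hl.neg_one_pow, neg_one_smul]

end Trace

theorem IsCliffordSystem.trace_prod_map_eq_zero_of_odd_choose_two {ι E : Type*}
    [NormedAddCommGroup E] [InnerProductSpace ℝ E] [FiniteDimensional ℝ E]
    {P : ι → E →ₗ[ℝ] E} (hC : IsCliffordSystem P) {l : List ι} (hl : l.Nodup)
    (hc : Odd (l.length.choose 2)) : trace ℝ E (l.map P).prod = 0 :=
  trace_eq_zero_of_star_eq_neg <| by
    rw [star_prod_map_of_isSelfAdjoint hC.isSelfAdjoint, hC.anticommute.prod_map_reverse hl,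
      hc.neg_one_pow, neg_one_smul]

section FiniteClifford

variable {E : Type*} [NormedAddCommGroup E] [InnerProductSpace ℝ E] [FiniteDimensional ℝ E]
  {n : ℕ} {P : Fin n → E →ₗ[ℝ] E}

-- The condition says `n % 4 ≠ 1`; for `n = 1`, `P 0 = 1` has nonzero trace.
theorem IsCliffordSystem.trace_cliffordMonomial_eq_zero (hC : IsCliffordSystem P)
    (hn : Even n ∨ Odd (n.choose 2)) {S : Finset (Fin n)} (hS : S.Nonempty) :
    trace ℝ E (cliffordMonomial P (List.finRange n) S) = 0 := by
  set l := (List.finRange n).filter (· ∈ S) with hl_def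
  have hl : l.Nodup := (List.nodup_finRange n).filter _
  change trace ℝ E (l.map P).prod = 0
  rcases Nat.even_or_odd l.length with heven | hodd
  · obtain ⟨b, hb⟩ := hS
    obtain ⟨a, l', hal'⟩ :=
      List.exists_cons_of_ne_nil (List.ne_nil_of_mem (by simpa [hl_def] using hb : b ∈ l))
    rw [hal'] at heven hl ⊢
    rw [List.length_cons, Nat.even_add_one, Nat.not_even_iff_odd] at heven
    rw [List.map_cons, List.prod_cons]
    exact hC.anticommute.trace_mul_prod_map_eq_zero (List.nodup_cons.mp hl).1 heven
  · by_cases hfull : ∃ a, a ∉ S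
    · obtain ⟨a, ha⟩ := hfull
      exact hC.anticommute.trace_prod_map_eq_zero_of_not_mem (hC.mul_self a)
        (by simp [hl_def, ha]) hodd
    · simp only [not_exists, not_not] at hfull
      have hlen : l.length = n := by simp [hl_def, hfull]
      refine hC.trace_prod_map_eq_zero_of_odd_choose_two hl ?_
      rw [hlen] at hodd ⊢
      exact hn.resolve_left (Nat.not_even_iff_odd.mpr hodd)

theorem IsCliffordSystem.linearIndependent_cliffordMonomial [Nontrivial E]
    (hC : IsCliffordSystem P) (hn : Even n ∨ Odd (n.choose 2)) :
    LinearIndependent ℝ (cliffordMonomial P (List.finRange n)) := by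
  let B : LinearMap.BilinForm ℝ (E →ₗ[ℝ] E) := (LinearMap.mul ℝ _).compr₂ (trace ℝ E)
  have hB : ∀ X Y, B X Y = trace ℝ E (X * Y) := fun _ _ => rfl
  refine LinearMap.linearIndependent_of_isOrthoᵢ (B := B) (fun S T hST => ?_) fun S => ?_
  · obtain ⟨k, hk⟩ := hC.anticommute.cliffordMonomial_mul hC.mul_self (List.nodup_finRange n) S T
    simp only [Function.onFun, hB, hk, map_zsmul]
    rw [hC.trace_cliffordMonomial_eq_zero hn (Finset.symmDiff_nonempty.mpr hST), smul_zero]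
  · obtain ⟨k, hk⟩ := hC.anticommute.cliffordMonomial_mul hC.mul_self (List.nodup_finRange n) S S
    rw [hB, hk, symmDiff_self, Finset.bot_eq_empty, cliffordMonomial_empty, map_zsmul, trace_one]
    exact smul_ne_zero (pow_ne_zero _ (by norm_num)) (by exact_mod_cast Module.finrank_pos.ne')

theorem IsCliffordSystem.two_pow_le_finrank_sq [Nontrivial E] (hC : IsCliffordSystem P)
    (hn : Even n ∨ Odd (n.choose 2)) : 2 ^ n ≤ Module.finrank ℝ E ^ 2 := by
  have := (hC.linearIndependent_cliffordMonomial hn).fintype_card_le_finrank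
  rwa [Fintype.card_finset, Fintype.card_fin, Module.finrank_linearMap, ← sq] at this

end FiniteClifford

/-- There is no Clifford system of 7 elements on the Euclidean space `ℝ^8`:
there do not exist seven self-adjoint endomorphisms `P 0, …, P 6` of
`EuclideanSpace ℝ (Fin 8)` squaring to the identity and pairwise anti-commuting. -/
theorem no_cliffordSystem_seven_elements_on_R8 :
    ¬ ∃ P : Fin 7 → (EuclideanSpace ℝ (Fin 8) →ₗ[ℝ] EuclideanSpace ℝ (Fin 8)),
      (∀ α, ∀ x y : EuclideanSpace ℝ (Fin 8), ⟪P α x, y⟫ = ⟪x, P α y⟫) ∧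
      (∀ α, P α ∘ₗ P α = LinearMap.id) ∧
      (∀ α β, α ≠ β → P α ∘ₗ P β = -(P β ∘ₗ P α)) := by
  rintro ⟨P, hsymm, hsq, hanti⟩
  have hC : IsCliffordSystem P :=
    ⟨fun α => (isSymmetric_iff_isSelfAdjoint _).mp (hsymm α), hsq, fun α β h => hanti α β h⟩
  have := hC.two_pow_le_finrank_sq (Or.inr (by decide))
  rw [finrank_euclideanSpace_fin] at this
  norm_num at this
end

section
/- The complex Hermitian space ℂ^16 does not admit any family of ten ℂ-linear endomorphisms P_0, …, P_9 that are self-adjoint with respect to the standard Hermitian inner product and satisfy P_α ∘ P_α = Id for every α and P_α ∘ P_β = −P_β ∘ P_α whenever α ≠ β. -/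
open scoped ComplexInnerProductSpace

/-!
For anticommuting involutions `P₀, P₁`, the element `Q = i P₀ P₁` is an involution that commutes
with every other `Pₖ` and anticommutes with `P₀`, so `e = (1 + Q) / 2` is an idempotent. If `M`
commutes with `P₀`, then `Q M` anticommutes with the involution `P₀` and is therefore traceless,
whence `tr (e M) = tr M / 2`. Starting from an idempotent `E` commuting with all `Pₖ`, the
idempotent `e E` commutes with `P₂, P₃, …` and has half the trace of `E`; since the trace of an
idempotent is its rank, induction over the pairs `(P₀, P₁), (P₂, P₃), …` shows that `2 ^ m`
divides the dimension whenever there are `2 m` such involutions. For `m = 5` this is `32 ∣ 16`.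
-/

open LinearMap Module

structure IsCliffordSystem_s3 {ι A : Type*} [Ring A] (P : ι → A) : Prop where
  mul_self : ∀ i, P i * P i = 1
  anticomm : ∀ i j, i ≠ j → P i * P j = -(P j * P i)

namespace IsCliffordSystem_s3

variable {ι κ A : Type*} [Ring A] {P : ι → A}

theorem comp_injective (hP : IsCliffordSystem_s3 P) {f : κ → ι} (hf : f.Injective) :
    IsCliffordSystem_s3 (P ∘ f) :=
  ⟨fun i => hP.mul_self (f i), fun _ _ h => hP.anticomm _ _ (hf.ne h)⟩

theorem commute_mul (hP : IsCliffordSystem_s3 P) {i j k : ι} (hi : k ≠ i) (hj : k ≠ j) :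
    Commute (P k) (P i * P j) := by
  calc P k * (P i * P j) = -(P i * (P k * P j)) := by
        rw [← mul_assoc, hP.anticomm k i hi, neg_mul, mul_assoc]
    _ = P i * P j * P k := by rw [hP.anticomm k j hj, mul_neg, neg_neg, mul_assoc]

theorem mul_mul_self (hP : IsCliffordSystem_s3 P) {i j : ι} (h : i ≠ j) :
    P i * P j * (P i * P j) = -1 := by
  calc P i * P j * (P i * P j) = P i * (P j * P i) * P j := by noncomm_ring
    _ = -(P i * P i * (P j * P j)) := by rw [hP.anticomm j i h.symm]; noncomm_ring
    _ = -1 := by rw [hP.mul_self, hP.mul_self, mul_one]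

theorem anticomm_mul (hP : IsCliffordSystem_s3 P) {i j : ι} (h : i ≠ j) :
    P i * (P i * P j) = -(P i * P j * P i) := by
  calc P i * (P i * P j) = P j := by rw [← mul_assoc, hP.mul_self, one_mul]
    _ = -(P i * (P j * P i)) := by
        rw [hP.anticomm j i h.symm, mul_neg, neg_neg, ← mul_assoc, hP.mul_self, one_mul]
    _ = -(P i * P j * P i) := by rw [mul_assoc]

end IsCliffordSystem_s3

theorem isIdempotentElem_inv_two_smul_one_add {K A : Type*} [Field K] [CharZero K] [Ring A]
    [Algebra K A] {Q : A} (hQ : Q * Q = 1) : IsIdempotentElem ((2 : K)⁻¹ • (1 + Q)) := by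
  have hsq : (1 + Q) * (1 + Q) = (2 : K) • (1 + Q) := by
    calc (1 + Q) * (1 + Q) = 1 + Q + Q + Q * Q := by noncomm_ring
      _ = (2 : K) • (1 + Q) := by rw [hQ, two_smul]; abel
  rw [IsIdempotentElem, smul_mul_smul_comm, hsq, smul_smul, mul_assoc,
    inv_mul_cancel₀ two_ne_zero, mul_one]

section Trace

variable {K V : Type*} [Field K] [CharZero K] [AddCommGroup V] [Module K V]

theorem LinearMap.trace_eq_zero_of_anticomm {r x : End K V} (hr : r * r = 1)
    (h : r * x = -(x * r)) : trace K V x = 0 := by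
  have hconj : r * (x * r) = -x := by rw [← mul_assoc, h, neg_mul, mul_assoc, hr, mul_one]
  have : trace K V x = -trace K V x := by
    rw [← map_neg, ← hconj, trace_mul_comm, mul_assoc, hr, mul_one]
  exact CharZero.eq_neg_self_iff.mp this

theorem LinearMap.trace_inv_two_smul_one_add_mul [FiniteDimensional K V] {r Q M : End K V}
    (hr : r * r = 1) (hQ : r * Q = -(Q * r)) (hM : Commute r M) :
    trace K V ((2 : K)⁻¹ • (1 + Q) * M) = 2⁻¹ * trace K V M := by
  have hQM : trace K V (Q * M) = 0 := by
    refine trace_eq_zero_of_anticomm hr ?_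
    rw [← mul_assoc, hQ, neg_mul, mul_assoc, hM.eq, ← mul_assoc]
  rw [smul_mul_assoc, map_smul, add_mul, one_mul, map_add, hQM, add_zero, smul_eq_mul]

end Trace

section PairIdempotent

variable {ι A : Type*} [Ring A] [Algebra ℂ A] {P : ι → A} {i j k : ι}

noncomputable def pairIdempotent (P : ι → A) (i j : ι) : A := (2 : ℂ)⁻¹ • (1 + Complex.I • (P i * P j))

theorem pairIdempotent_commute {x : A} (hi : Commute (P i) x) (hj : Commute (P j) x) :
    Commute (pairIdempotent P i j) x :=
  ((Commute.one_left _).add_left ((hi.mul_left hj).smul_left _)).smul_left _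

namespace IsCliffordSystem_s3

theorem isIdempotentElem_pairIdempotent (hP : IsCliffordSystem_s3 P) (h : i ≠ j) :
    IsIdempotentElem (pairIdempotent P i j) :=
  isIdempotentElem_inv_two_smul_one_add <| by
    rw [smul_mul_smul_comm, hP.mul_mul_self h, Complex.I_mul_I, neg_one_smul, neg_neg]

theorem commute_pairIdempotent (hP : IsCliffordSystem_s3 P) (hi : k ≠ i) (hj : k ≠ j) :
    Commute (P k) (pairIdempotent P i j) :=
  ((Commute.one_right _).add_right ((hP.commute_mul hi hj).smul_right _)).smul_right _

end IsCliffordSystem_s3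

end PairIdempotent

namespace IsCliffordSystem_s3

variable {V : Type*} [AddCommGroup V] [Module ℂ V] [FiniteDimensional ℂ V]

theorem trace_pairIdempotent_mul {ι : Type*} {P : ι → End ℂ V} (hP : IsCliffordSystem_s3 P)
    {i j : ι} (h : i ≠ j) {M : End ℂ V} (hM : Commute (P i) M) :
    trace ℂ V (pairIdempotent P i j * M) = 2⁻¹ * trace ℂ V M :=
  trace_inv_two_smul_one_add_mul (hP.mul_self i)
    (by rw [mul_smul_comm, smul_mul_assoc, hP.anticomm_mul h, smul_neg]) hM

theorem exists_trace_eq_two_pow_mul {m : ℕ} {P : Fin (2 * m) → End ℂ V}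
    (hP : IsCliffordSystem_s3 P) {E : End ℂ V} (hE : IsIdempotentElem E)
    (hPE : ∀ i, Commute (P i) E) : ∃ k : ℕ, trace ℂ V E = 2 ^ m * k := by
  induction m generalizing E with
  | zero => exact ⟨finrank ℂ (range E), by rw [hE.isProj_range.trace, pow_zero, one_mul]⟩
  | succ m ih =>
    let a : Fin (2 * (m + 1)) := ⟨0, by omega⟩
    let b : Fin (2 * (m + 1)) := ⟨1, by omega⟩
    let tail : Fin (2 * m) → Fin (2 * (m + 1)) := fun i => ⟨i + 2, by omega⟩
    have hab : a ≠ b := by simp only [ne_eq, Fin.ext_iff, a, b]; omega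
    have ha (i) : tail i ≠ a := by simp only [ne_eq, Fin.ext_iff, tail, a]; omega
    have hb (i) : tail i ≠ b := by simp only [ne_eq, Fin.ext_iff, tail, b]; omega
    have htail : tail.Injective := fun i j h => by
      simp only [Fin.ext_iff, tail] at h; exact Fin.ext (by omega)
    obtain ⟨k, hk⟩ := ih (hP.comp_injective htail)
      ((hP.isIdempotentElem_pairIdempotent hab).mul_of_commute
        (pairIdempotent_commute (hPE a) (hPE b)) hE)
      fun i => (hP.commute_pairIdempotent (ha i) (hb i)).mul_right (hPE (tail i))
    have hhalf := hP.trace_pairIdempotent_mul hab (hPE a)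
    rw [hk] at hhalf
    exact ⟨k, by linear_combination (-2 : ℂ) * hhalf⟩

theorem two_pow_dvd_finrank {m : ℕ} {P : Fin (2 * m) → End ℂ V} (hP : IsCliffordSystem_s3 P) :
    2 ^ m ∣ finrank ℂ V := by
  obtain ⟨k, hk⟩ := hP.exists_trace_eq_two_pow_mul IsIdempotentElem.one
    fun i => Commute.one_right _
  rw [trace_one] at hk
  exact ⟨k, by exact_mod_cast hk⟩

end IsCliffordSystem_s3

/-- The Hermitian space `ℂ^16` admits no family of ten `ℂ`-linear
endomorphisms `P 0, …, P 9` that are self-adjoint with respect to the standard Hermitian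
inner product, square to the identity, and pairwise anti-commute. -/
theorem no_hermitian_cliffordSystem_ten_elements_on_C16 :
    ¬ ∃ P : Fin 10 → (EuclideanSpace ℂ (Fin 16) →ₗ[ℂ] EuclideanSpace ℂ (Fin 16)),
      (∀ α, ∀ x y : EuclideanSpace ℂ (Fin 16), ⟪P α x, y⟫ = ⟪x, P α y⟫) ∧
      (∀ α, P α ∘ₗ P α = LinearMap.id) ∧
      (∀ α β, α ≠ β → P α ∘ₗ P β = -(P β ∘ₗ P α)) := by
  rintro ⟨P, -, hsq, hac⟩
  have h := IsCliffordSystem_s3.two_pow_dvd_finrank (m := 5) (P := P) ⟨hsq, hac⟩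
  rw [finrank_euclideanSpace_fin] at h
  norm_num at h
end

section
/- (Procedure to write new Clifford systems from old.) Let (P_0, P_1, …, P_m) be a Clifford system on a finite-dimensional real inner product space V. Define linear endomorphisms of V × V (with the product inner product) by: Q_0(x, y) = (y, x); Q_{m+1}(x, y) = (x, −y); and, for 1 ≤ α ≤ m, Q_α(x, y) = (−(P_0 ∘ P_α) y, (P_0 ∘ P_α) x). Then (Q_0, Q_1, …, Q_m, Q_{m+1}) is a Clifford system of m+2 elements on V × V: each Q_α is self-adjoint, Q_α ∘ Q_α = Id for every α, and Q_α ∘ Q_β = −Q_β ∘ Q_α whenever α ≠ β. -/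
open scoped RealInnerProductSpace

/-!
For `α ≥ 1` put `A α = P 0 ∘ P α`. The Clifford relations of the `P`s say exactly that the `A α`
are skew-adjoint, square to `-1` and anticommute pairwise. In block form on `V × V`, `Q 0` is the
swap `[[0, 1], [1, 0]]`, `Q (m+1)` the reflection `[[1, 0], [0, -1]]` and `Q α` the rotation
`[[0, -A α], [A α, 0]]`: the swap and the reflection are self-adjoint involutions anticommuting
with each other and with every rotation, a rotation by a skew-adjoint square root of `-1` is a
self-adjoint involution, and two rotations anticommute exactly when their `A`s do.
-/

@[ext]
lemma WithLp.prod_ext {p : ENNReal} {α β : Type*} {u v : WithLp p (α × β)}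
    (h₁ : u.fst = v.fst) (h₂ : u.snd = v.snd) : u = v :=
  (WithLp.ext_iff p).2 (Prod.ext h₁ h₂)

structure IsCliffordSystem_s4 {ι E : Type*} [NormedAddCommGroup E] [InnerProductSpace ℝ E]
    (P : ι → E →ₗ[ℝ] E) : Prop where
  isSymmetric : ∀ α, (P α).IsSymmetric
  comp_self : ∀ α, P α ∘ₗ P α = LinearMap.id
  anticomm : ∀ α β, α ≠ β → P α ∘ₗ P β = -(P β ∘ₗ P α)

namespace IsCliffordSystem_s4

variable {ι E : Type*} [NormedAddCommGroup E] [InnerProductSpace ℝ E]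

theorem cons {n : ℕ} {R : Fin n → E →ₗ[ℝ] E} {S : E →ₗ[ℝ] E} (hR : IsCliffordSystem_s4 R)
    (hS : S.IsSymmetric) (hSS : S ∘ₗ S = LinearMap.id) (hSR : ∀ i, S ∘ₗ R i = -(R i ∘ₗ S)) :
    IsCliffordSystem_s4 (Fin.cons S R : Fin (n + 1) → E →ₗ[ℝ] E) where
  isSymmetric := Fin.cases hS hR.isSymmetric
  comp_self := Fin.cases hSS hR.comp_self
  anticomm α β hαβ := by
    cases α using Fin.cases <;> cases β using Fin.cases <;>
      simp only [Fin.cons_zero, Fin.cons_succ]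
    · exact absurd rfl hαβ
    · exact hSR _
    · exact (neg_eq_iff_eq_neg.2 (hSR _)).symm
    · exact hR.anticomm _ _ (ne_of_apply_ne Fin.succ hαβ)

theorem snoc {n : ℕ} {R : Fin n → E →ₗ[ℝ] E} {S : E →ₗ[ℝ] E} (hR : IsCliffordSystem_s4 R)
    (hS : S.IsSymmetric) (hSS : S ∘ₗ S = LinearMap.id) (hSR : ∀ i, S ∘ₗ R i = -(R i ∘ₗ S)) :
    IsCliffordSystem_s4 (Fin.snoc R S : Fin (n + 1) → E →ₗ[ℝ] E) where
  isSymmetric := Fin.lastCases (by simpa using hS) (by simpa using hR.isSymmetric)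
  comp_self := Fin.lastCases (by simpa using hSS) (by simpa using hR.comp_self)
  anticomm α β hαβ := by
    cases α using Fin.lastCases <;> cases β using Fin.lastCases <;>
      simp only [Fin.snoc_last, Fin.snoc_castSucc]
    · exact absurd rfl hαβ
    · exact hSR _
    · exact (neg_eq_iff_eq_neg.2 (hSR _)).symm
    · exact hR.anticomm _ _ (ne_of_apply_ne Fin.castSucc hαβ)

variable {P : ι → E →ₗ[ℝ] E} (hP : IsCliffordSystem_s4 P) {α β γ : ι}
include hP

theorem apply_apply (α : ι) (x : E) : P α (P α x) = x :=
  LinearMap.congr_fun (hP.comp_self α) x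

theorem apply_apply_of_ne (h : α ≠ β) (x : E) : P α (P β x) = -P β (P α x) :=
  LinearMap.congr_fun (hP.anticomm α β h) x

theorem inner_comp_apply (hβ : β ≠ α) (x y : E) :
    ⟪(P α ∘ₗ P β) x, y⟫ = -⟪x, (P α ∘ₗ P β) y⟫ := by
  rw [LinearMap.comp_apply, hP.isSymmetric α, hP.isSymmetric β, LinearMap.comp_apply,
    hP.apply_apply_of_ne hβ, inner_neg_right]

theorem comp_comp_self (hβ : β ≠ α) : (P α ∘ₗ P β) ∘ₗ (P α ∘ₗ P β) = -LinearMap.id := by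
  ext x
  simp only [LinearMap.comp_apply, LinearMap.neg_apply, LinearMap.id_apply]
  rw [hP.apply_apply_of_ne hβ (P β x), map_neg, hP.apply_apply, hP.apply_apply]

theorem comp_anticomm (hβ : β ≠ α) (hγ : γ ≠ α) (hβγ : β ≠ γ) :
    (P α ∘ₗ P β) ∘ₗ (P α ∘ₗ P γ) = -((P α ∘ₗ P γ) ∘ₗ (P α ∘ₗ P β)) := by
  ext x
  simp only [LinearMap.comp_apply, LinearMap.neg_apply]
  rw [hP.apply_apply_of_ne hβ (P γ x), hP.apply_apply_of_ne hγ (P β x), map_neg, map_neg,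
    hP.apply_apply, hP.apply_apply, hP.apply_apply_of_ne hβγ]

end IsCliffordSystem_s4

section PairOperators

variable {E : Type*} [NormedAddCommGroup E] [InnerProductSpace ℝ E]

def pairSwap : WithLp 2 (E × E) →ₗ[ℝ] WithLp 2 (E × E) where
  toFun u := WithLp.toLp 2 (u.snd, u.fst)
  map_add' _ _ := rfl
  map_smul' _ _ := rfl

def pairReflect : WithLp 2 (E × E) →ₗ[ℝ] WithLp 2 (E × E) where
  toFun u := WithLp.toLp 2 (u.fst, -u.snd)
  map_add' _ _ := by ext <;> simp [add_comm]
  map_smul' _ _ := by ext <;> simp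

def pairRotate (J : E →ₗ[ℝ] E) : WithLp 2 (E × E) →ₗ[ℝ] WithLp 2 (E × E) where
  toFun u := WithLp.toLp 2 (-J u.snd, J u.fst)
  map_add' _ _ := by ext <;> simp [add_comm]
  map_smul' _ _ := by ext <;> simp

variable (J K : E →ₗ[ℝ] E) (u : WithLp 2 (E × E))

@[simp] lemma pairSwap_fst : (pairSwap u).fst = u.snd := rfl
@[simp] lemma pairSwap_snd : (pairSwap u).snd = u.fst := rfl
@[simp] lemma pairReflect_fst : (pairReflect u).fst = u.fst := rfl
@[simp] lemma pairReflect_snd : (pairReflect u).snd = -u.snd := rfl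
@[simp] lemma pairRotate_fst : (pairRotate J u).fst = -J u.snd := rfl
@[simp] lemma pairRotate_snd : (pairRotate J u).snd = J u.fst := rfl

lemma pairSwap_isSymmetric : (pairSwap : WithLp 2 (E × E) →ₗ[ℝ] _).IsSymmetric := by
  intro u v
  simp only [WithLp.prod_inner_apply, WithLp.ofLp_fst, WithLp.ofLp_snd, pairSwap_fst,
    pairSwap_snd, add_comm]

lemma pairReflect_isSymmetric : (pairReflect : WithLp 2 (E × E) →ₗ[ℝ] _).IsSymmetric := by
  intro u v
  simp [inner_neg_left, inner_neg_right]

lemma pairRotate_isSymmetric (hJ : ∀ x y, ⟪J x, y⟫ = -⟪x, J y⟫) :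
    (pairRotate J).IsSymmetric := by
  intro u v
  simp only [WithLp.prod_inner_apply, WithLp.ofLp_fst, WithLp.ofLp_snd, pairRotate_fst,
    pairRotate_snd, inner_neg_left, inner_neg_right, hJ]
  ring

lemma pairSwap_comp_self : (pairSwap : WithLp 2 (E × E) →ₗ[ℝ] _) ∘ₗ pairSwap = LinearMap.id := by
  ext <;> simp

lemma pairReflect_comp_self :
    (pairReflect : WithLp 2 (E × E) →ₗ[ℝ] _) ∘ₗ pairReflect = LinearMap.id := by
  ext <;> simp

lemma pairRotate_comp_self (hJ : J ∘ₗ J = -LinearMap.id) :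
    pairRotate J ∘ₗ pairRotate J = LinearMap.id := by
  ext u <;> simp [← LinearMap.comp_apply J J, hJ]

lemma pairSwap_comp_pairReflect :
    (pairSwap : WithLp 2 (E × E) →ₗ[ℝ] _) ∘ₗ pairReflect = -(pairReflect ∘ₗ pairSwap) := by
  ext <;> simp

lemma pairSwap_comp_pairRotate : pairSwap ∘ₗ pairRotate J = -(pairRotate J ∘ₗ pairSwap) := by
  ext <;> simp

lemma pairReflect_comp_pairRotate :
    pairReflect ∘ₗ pairRotate J = -(pairRotate J ∘ₗ pairReflect) := by
  ext <;> simp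

lemma pairRotate_comp_pairRotate (hJK : J ∘ₗ K = -(K ∘ₗ J)) :
    pairRotate J ∘ₗ pairRotate K = -(pairRotate K ∘ₗ pairRotate J) := by
  ext u <;> simp [← LinearMap.comp_apply J K, hJK]

theorem isCliffordSystem_pairRotate {ι : Type*} {J : ι → E →ₗ[ℝ] E}
    (hskew : ∀ i x y, ⟪J i x, y⟫ = -⟪x, J i y⟫)
    (hsq : ∀ i, J i ∘ₗ J i = -LinearMap.id) (hanti : ∀ i j, i ≠ j → J i ∘ₗ J j = -(J j ∘ₗ J i)) :
    IsCliffordSystem_s4 fun i => pairRotate (J i) where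
  isSymmetric i := pairRotate_isSymmetric _ (hskew i)
  comp_self i := pairRotate_comp_self _ (hsq i)
  anticomm i j hij := pairRotate_comp_pairRotate _ _ (hanti i j hij)

end PairOperators

section Doubling

variable {E : Type*} [NormedAddCommGroup E] [InnerProductSpace ℝ E] {m : ℕ}

def cliffordDouble (P : Fin (m + 1) → E →ₗ[ℝ] E) :
    Fin (m + 2) → WithLp 2 (E × E) →ₗ[ℝ] WithLp 2 (E × E) :=
  Fin.snoc (Fin.cons pairSwap fun i => pairRotate (P 0 ∘ₗ P i.succ)) pairReflect

theorem IsCliffordSystem_s4.double {P : Fin (m + 1) → E →ₗ[ℝ] E} (hP : IsCliffordSystem_s4 P) :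
    IsCliffordSystem_s4 (cliffordDouble P) := by
  have hrot : IsCliffordSystem_s4 fun i : Fin m => pairRotate (P 0 ∘ₗ P i.succ) :=
    isCliffordSystem_pairRotate (fun i => hP.inner_comp_apply i.succ_ne_zero)
      (fun i => hP.comp_comp_self i.succ_ne_zero)
      fun i j hij =>
        hP.comp_anticomm i.succ_ne_zero j.succ_ne_zero ((Fin.succ_injective _).ne hij)
  have hcons := hrot.cons pairSwap_isSymmetric pairSwap_comp_self
    fun i => pairSwap_comp_pairRotate _
  refine hcons.snoc pairReflect_isSymmetric pairReflect_comp_self fun i => ?_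
  cases i using Fin.cases
  · simpa using (neg_eq_iff_eq_neg.2 pairSwap_comp_pairReflect).symm
  · simpa using pairReflect_comp_pairRotate _

end Doubling

theorem cliffordSystem_doubling_general
    {V : Type*} [NormedAddCommGroup V] [InnerProductSpace ℝ V]
    {m : ℕ} (P : Fin (m + 1) → V →ₗ[ℝ] V)
    (hsa : ∀ α, ∀ x y : V, ⟪P α x, y⟫ = ⟪x, P α y⟫)
    (hsq : ∀ α, P α ∘ₗ P α = LinearMap.id)
    (hanti : ∀ α β, α ≠ β → P α ∘ₗ P β = -(P β ∘ₗ P α))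
    (Q : Fin (m + 2) → (WithLp 2 (V × V) →ₗ[ℝ] WithLp 2 (V × V)))
    (hQ0 : ∀ x y : V,
      Q 0 ((WithLp.equiv 2 (V × V)).symm (x, y)) = (WithLp.equiv 2 (V × V)).symm (y, x))
    (hQlast : ∀ x y : V,
      Q (Fin.last (m + 1)) ((WithLp.equiv 2 (V × V)).symm (x, y)) =
        (WithLp.equiv 2 (V × V)).symm (x, -y))
    (hQmid : ∀ (α : Fin (m + 2)) (_ : α ≠ 0) (hl : α ≠ Fin.last (m + 1)), ∀ x y : V,
      Q α ((WithLp.equiv 2 (V × V)).symm (x, y)) =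
        (WithLp.equiv 2 (V × V)).symm
          (-(P 0 (P (α.castPred hl) y)), P 0 (P (α.castPred hl) x))) :
    (∀ α, ∀ u w : WithLp 2 (V × V), ⟪Q α u, w⟫ = ⟪u, Q α w⟫) ∧
    (∀ α, Q α ∘ₗ Q α = LinearMap.id) ∧
    (∀ α β, α ≠ β → Q α ∘ₗ Q β = -(Q β ∘ₗ Q α)) := by
  have hQ : Q = cliffordDouble P := by
    funext α
    refine LinearMap.ext fun u => ?_
    change Q α ((WithLp.equiv 2 (V × V)).symm (u.fst, u.snd)) = _
    cases α using Fin.lastCases with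
    | last => rw [hQlast, cliffordDouble, Fin.snoc_last]; rfl
    | cast α =>
      cases α using Fin.cases with
      | zero =>
        rw [cliffordDouble, Fin.snoc_castSucc, Fin.cons_zero, Fin.castSucc_zero, hQ0]
        rfl
      | succ i =>
        rw [hQmid _ (Fin.castSucc_ne_zero_iff.2 i.succ_ne_zero) (Fin.castSucc_ne_last _),
          cliffordDouble, Fin.snoc_castSucc, Fin.cons_succ, Fin.castPred_castSucc]
        rfl
  have hQcl : IsCliffordSystem_s4 Q := hQ ▸ IsCliffordSystem_s4.double ⟨hsa, hsq, hanti⟩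
  exact ⟨hQcl.isSymmetric, hQcl.comp_self, hQcl.anticomm⟩

/-- (Procedure to write new Clifford systems from old.)
Given a Clifford system `(P 0, …, P m)` on a finite-dimensional real inner product space `V`,
the endomorphisms of `V × V` (with the product, i.e. `L²`, inner product) given by
`Q 0 (x, y) = (y, x)`, `Q (m+1) (x, y) = (x, -y)` and, for `1 ≤ α ≤ m`,
`Q α (x, y) = (-(P 0 ∘ P α) y, (P 0 ∘ P α) x)`, form a Clifford system of `m + 2`
elements on `V × V`. -/
theorem cliffordSystem_doubling
    {V : Type*} [NormedAddCommGroup V] [InnerProductSpace ℝ V] [FiniteDimensional ℝ V]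
    {m : ℕ} (P : Fin (m + 1) → V →ₗ[ℝ] V)
    (hsa : ∀ α, ∀ x y : V, ⟪P α x, y⟫ = ⟪x, P α y⟫)
    (hsq : ∀ α, P α ∘ₗ P α = LinearMap.id)
    (hanti : ∀ α β, α ≠ β → P α ∘ₗ P β = -(P β ∘ₗ P α))
    (Q : Fin (m + 2) → (WithLp 2 (V × V) →ₗ[ℝ] WithLp 2 (V × V)))
    (hQ0 : ∀ x y : V,
      Q 0 ((WithLp.equiv 2 (V × V)).symm (x, y)) = (WithLp.equiv 2 (V × V)).symm (y, x))
    (hQlast : ∀ x y : V,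
      Q (Fin.last (m + 1)) ((WithLp.equiv 2 (V × V)).symm (x, y)) =
        (WithLp.equiv 2 (V × V)).symm (x, -y))
    (hQmid : ∀ (α : Fin (m + 2)) (_ : α ≠ 0) (hl : α ≠ Fin.last (m + 1)), ∀ x y : V,
      Q α ((WithLp.equiv 2 (V × V)).symm (x, y)) =
        (WithLp.equiv 2 (V × V)).symm
          (-(P 0 (P (α.castPred hl) y)), P 0 (P (α.castPred hl) x))) :
    (∀ α, ∀ u w : WithLp 2 (V × V), ⟪Q α u, w⟫ = ⟪u, Q α w⟫) ∧
    (∀ α, Q α ∘ₗ Q α = LinearMap.id) ∧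
    (∀ α β, α ≠ β → Q α ∘ₗ Q β = -(Q β ∘ₗ Q α)) :=
  cliffordSystem_doubling_general P hsa hsq hanti Q hQ0 hQlast hQmid
end

section
/- Let R be a commutative ring and let x be a 9 × 9 skew-symmetric matrix over R (x_{βα} = −x_{αβ}, x_{αα} = 0). Define F = Σ_{α,β,α',β' = 1}^{9} x_{αβ} · x_{αβ'} · x_{α'β} · x_{α'β'}, P = Σ_{1 ≤ α < β ≤ 9} x_{αβ}², and Q = Σ_{1 ≤ α₁ < α₂ < α₃ < α₄ ≤ 9} (x_{α₁α₂} x_{α₃α₄} − x_{α₁α₃} x_{α₂α₄} + x_{α₁α₄} x_{α₂α₃})². Then F = 2 P² − 4 Q. -/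
theorem sum9aux {M : Type*} [AddCommMonoid M] (f : Fin 9 → M) :
    ∑ i, f i = f 0 + f 1 + f 2 + f 3 + f 4 + f 5 + f 6 + f 7 + f 8 := by
  rw [Fin.sum_univ_succ, Fin.sum_univ_eight]
  simp only [show ((0:Fin 8).succ : Fin 9) = 1 from rfl, show ((1:Fin 8).succ : Fin 9) = 2 from rfl,
    show ((2:Fin 8).succ : Fin 9) = 3 from rfl, show ((3:Fin 8).succ : Fin 9) = 4 from rfl,
    show ((4:Fin 8).succ : Fin 9) = 5 from rfl, show ((5:Fin 8).succ : Fin 9) = 6 from rfl,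
    show ((6:Fin 8).succ : Fin 9) = 7 from rfl, show ((7:Fin 8).succ : Fin 9) = 8 from rfl]
  abel

set_option maxHeartbeats 10000000 in
/-- For a `9 × 9` skew-symmetric matrix `x` over a commutative ring `R`,
with `F = Σ x_{αβ} x_{αβ'} x_{α'β} x_{α'β'}` (all four indices ranging over `{1,…,9}`),
`P = Σ_{α<β} x_{αβ}²`, and
`Q = Σ_{α₁<α₂<α₃<α₄} (x_{α₁α₂}x_{α₃α₄} − x_{α₁α₃}x_{α₂α₄} + x_{α₁α₄}x_{α₂α₃})²`,
one has `F = 2 P² − 4 Q`. -/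
theorem skew_matrix_F_eq_two_Psq_sub_four_Q {R : Type*} [CommRing R]
    (x : Fin 9 → Fin 9 → R)
    (hskew : ∀ α β, x β α = -x α β) (hdiag : ∀ α, x α α = 0) :
    (∑ α, ∑ β, ∑ α', ∑ β', x α β * x α β' * x α' β * x α' β') =
      2 * (∑ α, ∑ β ∈ Finset.univ.filter (fun β => α < β), x α β ^ 2) ^ 2 -
        4 * ∑ a, ∑ b ∈ Finset.univ.filter (fun b => a < b),
              ∑ c ∈ Finset.univ.filter (fun c => b < c),
                ∑ d ∈ Finset.univ.filter (fun d => c < d),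
                  (x a b * x c d - x a c * x b d + x a d * x b c) ^ 2 := by
  simp only [Finset.sum_filter, sum9aux]
  simp (config := { decide := true }) only [hdiag, if_true, if_false,
    mul_zero, zero_mul, add_zero, zero_add]
  simp only [show x 1 0 = -x 0 1 from hskew 0 1, show x 2 0 = -x 0 2 from hskew 0 2, show x 3 0 = -x 0 3 from hskew 0 3, show x 4 0 = -x 0 4 from hskew 0 4, show x 5 0 = -x 0 5 from hskew 0 5, show x 6 0 = -x 0 6 from hskew 0 6, show x 7 0 = -x 0 7 from hskew 0 7, show x 8 0 = -x 0 8 from hskew 0 8, show x 2 1 = -x 1 2 from hskew 1 2, show x 3 1 = -x 1 3 from hskew 1 3, show x 4 1 = -x 1 4 from hskew 1 4, show x 5 1 = -x 1 5 from hskew 1 5, show x 6 1 = -x 1 6 from hskew 1 6, show x 7 1 = -x 1 7 from hskew 1 7, show x 8 1 = -x 1 8 from hskew 1 8, show x 3 2 = -x 2 3 from hskew 2 3, show x 4 2 = -x 2 4 from hskew 2 4, show x 5 2 = -x 2 5 from hskew 2 5, show x 6 2 = -x 2 6 from hskew 2 6, show x 7 2 = -x 2 7 from hskew 2 7, show x 8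 2 = -x 2 8 from hskew 2 8, show x 4 3 = -x 3 4 from hskew 3 4, show x 5 3 = -x 3 5 from hskew 3 5, show x 6 3 = -x 3 6 from hskew 3 6, show x 7 3 = -x 3 7 from hskew 3 7, show x 8 3 = -x 3 8 from hskew 3 8, show x 5 4 = -x 4 5 from hskew 4 5, show x 6 4 = -x 4 6 from hskew 4 6, show x 7 4 = -x 4 7 from hskew 4 7, show x 8 4 = -x 4 8 from hskew 4 8, show x 6 5 = -x 5 6 from hskew 5 6, show x 7 5 = -x 5 7 from hskew 5 7, show x 8 5 = -x 5 8 from hskew 5 8, show x 7 6 = -x 6 7 from hskew 6 7, show x 8 6 = -x 6 8 from hskew 6 8, show x 8 7 = -x 7 8 from hskew 7 8]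
  ring
end

section
/- The Euclidean space ℝ^16 admits a Clifford system of 9 elements; that is, there exist nine self-adjoint linear endomorphisms I_1, …, I_9 of EuclideanSpace ℝ (Fin 16) with I_α ∘ I_α = Id for every α and I_α ∘ I_β = −I_β ∘ I_α whenever α ≠ β. -/
/-!
In the Cayley–Dickson basis `e₀, …, e₇` of the octonions one has `eᵢ eⱼ = ± e_(i xor j)`, so right
multiplication by a basis vector is a signed permutation matrix. Hence so are the octonionic Pauli
matrices `P₀ (u, v) = (u, -v)` and `P_(j+1) (u, v) = (v eⱼ, u ēⱼ)` on `𝕆 ⊕ 𝕆 ≅ ℝ¹⁶`. Signed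
permutations compose to signed permutations, so the Clifford relations for them reduce to finitely
many identities between index permutations and signs, which are checked by evaluation.
-/

open scoped RealInnerProductSpace

structure IsCliffordSystem_s9 {ι V : Type*} [NormedAddCommGroup V] [InnerProductSpace ℝ V]
    (P : ι → V →ₗ[ℝ] V) : Prop where
  isSymmetric : ∀ α, (P α).IsSymmetric
  comp_self : ∀ α, P α ∘ₗ P α = LinearMap.id
  comp_anticomm : ∀ α β, α ≠ β → P α ∘ₗ P β = -(P β ∘ₗ P α)

namespace IsCliffordSystem_s9

variable {ι V W : Type*} [NormedAddCommGroup V] [InnerProductSpace ℝ V]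
  [NormedAddCommGroup W] [InnerProductSpace ℝ W]

theorem conj {P : ι → V →ₗ[ℝ] V} (hP : IsCliffordSystem_s9 P) (e : V ≃ₗᵢ[ℝ] W) :
    IsCliffordSystem_s9 fun α => e.toLinearEquiv.conj (P α) where
  isSymmetric α x y := by
    simp only [LinearEquiv.conj_apply_apply, LinearIsometryEquiv.coe_toLinearEquiv]
    rw [e.inner_map_eq_flip, hP.isSymmetric]
    exact e.symm.inner_map_eq_flip x _
  comp_self α := by rw [← LinearEquiv.conj_comp, hP.comp_self, LinearEquiv.conj_id]
  comp_anticomm α β h := by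
    rw [← LinearEquiv.conj_comp, hP.comp_anticomm α β h, map_neg, LinearEquiv.conj_comp]

end IsCliffordSystem_s9

namespace EuclideanSpace

variable {ι : Type*}

def signedPerm (σ : ι → ι) (ε : ι → ℤˣ) : EuclideanSpace ℝ ι →ₗ[ℝ] EuclideanSpace ℝ ι where
  toFun x := WithLp.toLp 2 fun i => ε i • x (σ i)
  map_add' x y := by ext i; simp [smul_add]
  map_smul' c x := by ext i; simp [mul_smul_comm]

@[simp]
theorem signedPerm_apply (σ : ι → ι) (ε : ι → ℤˣ) (x : EuclideanSpace ℝ ι) (i : ι) :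
    signedPerm σ ε x i = ε i • x (σ i) := rfl

theorem signedPerm_id : signedPerm (id : ι → ι) 1 = LinearMap.id := by
  ext x i; simp

theorem signedPerm_neg (σ : ι → ι) (ε : ι → ℤˣ) : signedPerm σ (-ε) = -signedPerm σ ε := by
  ext x i; simp

theorem signedPerm_comp_signedPerm (σ τ : ι → ι) (ε δ : ι → ℤˣ) :
    signedPerm σ ε ∘ₗ signedPerm τ δ = signedPerm (τ ∘ σ) (ε * δ ∘ σ) := by
  ext x i; simp [mul_smul]

theorem isSymmetric_signedPerm [Fintype ι] {σ : ι → ι} {ε : ι → ℤˣ}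
    (hσ : σ.Involutive) (hε : ∀ i, ε (σ i) = ε i) : (signedPerm σ ε).IsSymmetric := by
  intro x y
  simp only [PiLp.inner_apply, signedPerm_apply, RCLike.inner_apply, conj_trivial]
  refine Fintype.sum_equiv (hσ.toPerm σ) _ _ fun i => ?_
  simp only [Function.Involutive.coe_toPerm, hσ i, hε, mul_smul_comm, smul_mul_assoc, mul_comm]

theorem signedPerm_comp_self {σ : ι → ι} {ε : ι → ℤˣ}
    (hσ : σ.Involutive) (hε : ∀ i, ε (σ i) = ε i) :
    signedPerm σ ε ∘ₗ signedPerm σ ε = LinearMap.id := by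
  rw [signedPerm_comp_signedPerm, ← signedPerm_id]
  congr 1
  · exact funext hσ
  · ext i; simp [hε, Int.units_mul_self]

theorem signedPerm_anticomm {σ τ : ι → ι} {ε δ : ι → ℤˣ}
    (hστ : ∀ i, σ (τ i) = τ (σ i)) (hεδ : ∀ i, ε i * δ (σ i) = -(δ i * ε (τ i))) :
    signedPerm σ ε ∘ₗ signedPerm τ δ = -(signedPerm τ δ ∘ₗ signedPerm σ ε) := by
  rw [signedPerm_comp_signedPerm, signedPerm_comp_signedPerm, ← signedPerm_neg]
  congr 1
  · exact funext fun i => (hστ i).symm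
  · exact funext hεδ

theorem isCliffordSystem_signedPerm {κ : Type*} [Fintype ι] (σ : κ → ι → ι) (ε : κ → ι → ℤˣ)
    (hσ : ∀ α i, σ α (σ α i) = i) (hε : ∀ α i, ε α (σ α i) = ε α i)
    (hcomm : ∀ α β, α ≠ β → ∀ i, σ α (σ β i) = σ β (σ α i))
    (hanti : ∀ α β, α ≠ β → ∀ i, ε α i * ε β (σ α i) = -(ε β i * ε α (σ β i))) :
    IsCliffordSystem_s9 fun α => signedPerm (σ α) (ε α) where
  isSymmetric α := isSymmetric_signedPerm (hσ α) (hε α)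
  comp_self α := signedPerm_comp_self (hσ α) (hε α)
  comp_anticomm α β h := signedPerm_anticomm (hcomm α β h) (hanti α β h)

end EuclideanSpace

open EuclideanSpace

/-- `eᵢ * eⱼ = octonionMulSign i j • e_(i ^^^ j)` for the Cayley–Dickson product
`(a, b) (c, d) = (a c - d̄ b, d a + b c̄)`. -/
def octonionMulSign : Fin 8 → Fin 8 → ℤˣ :=
  ![![1, 1, 1, 1, 1, 1, 1, 1],
    ![1, -1, 1, -1, 1, -1, -1, 1],
    ![1, -1, -1, 1, 1, 1, -1, -1],
    ![1, 1, -1, -1, 1, -1, 1, -1],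
    ![1, -1, -1, -1, -1, 1, 1, 1],
    ![1, 1, -1, 1, -1, -1, -1, 1],
    ![1, 1, 1, -1, -1, 1, -1, -1],
    ![1, -1, 1, 1, -1, -1, 1, -1]]

def octonionConjSign (j : Fin 8) : ℤˣ := if j = 0 then 1 else -1

/-- `Fin 2 × Fin 8` indexes the real basis of `𝕆 ⊕ 𝕆`. -/
def octonionicPauliPerm : Fin 9 → Fin 2 × Fin 8 → Fin 2 × Fin 8 :=
  Fin.cases id fun j p => (p.1 + 1, p.2 ^^^ j)

/-- Read off from `P_(j+1) (u, v) = (v eⱼ, u ēⱼ)` using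
`(v eⱼ)ᵢ = octonionMulSign (i ^^^ j) j • v (i ^^^ j)`. -/
def octonionicPauliSign : Fin 9 → Fin 2 × Fin 8 → ℤˣ :=
  Fin.cases (fun p => if p.1 = 0 then 1 else -1)
    fun j p => (if p.1 = 0 then 1 else octonionConjSign j) * octonionMulSign (p.2 ^^^ j) j

def octonionicPauli (α : Fin 9) :
    EuclideanSpace ℝ (Fin 2 × Fin 8) →ₗ[ℝ] EuclideanSpace ℝ (Fin 2 × Fin 8) :=
  signedPerm (octonionicPauliPerm α) (octonionicPauliSign α)

theorem isCliffordSystem_octonionicPauli : IsCliffordSystem_s9 octonionicPauli :=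
  isCliffordSystem_signedPerm _ _ (by decide) (by decide) (by decide) (by decide)

/-- The Euclidean space `ℝ^16` admits a Clifford system of 9 elements:
nine self-adjoint endomorphisms squaring to the identity and pairwise anti-commuting
(the standard `Spin(9)`-structure given by the octonionic Pauli matrices). -/
theorem exists_cliffordSystem_nine_elements_on_R16 :
    ∃ I : Fin 9 → (EuclideanSpace ℝ (Fin 16) →ₗ[ℝ] EuclideanSpace ℝ (Fin 16)),
      (∀ α, ∀ x y : EuclideanSpace ℝ (Fin 16), ⟪I α x, y⟫ = ⟪x, I α y⟫) ∧
      (∀ α, I α ∘ₗ I α = LinearMap.id) ∧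
      (∀ α β, α ≠ β → I α ∘ₗ I β = -(I β ∘ₗ I α)) := by
  obtain ⟨hsymm, hsq, hanti⟩ :=
    isCliffordSystem_octonionicPauli.conj (LinearIsometryEquiv.piLpCongrLeft 2 ℝ ℝ finProdFinEquiv)
  exact ⟨_, hsymm, hsq, hanti⟩
end

section
/- The Euclidean space ℝ^32 admits a Clifford system of 10 elements; that is, there exist ten self-adjoint linear endomorphisms P_0, …, P_9 of EuclideanSpace ℝ (Fin 32) with P_α ∘ P_α = Id for every α and P_α ∘ P_β = −P_β ∘ P_α whenever α ≠ β. -/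
/-!
Index the coordinates of `ℝ³²` by `𝔽₂⁵`. For `a m : 𝔽₂⁵` the signed permutation
`P(a, m) x = (i ↦ (-1) ^ (a ⬝ i) • x (i + m))`, a real Pauli string, is `(-1) ^ (a ⬝ m)` times
its own adjoint, and `P(a, m) P(b, n) = (-1) ^ (b ⬝ m) • P(a + b, m + n)`. Hence ten such operators
form a Clifford system as soon as `a_α ⬝ m_α = 0` and `a_β ⬝ m_α + a_α ⬝ m_β = 1` for `α ≠ β`,
which is a finite check on ten explicit pairs of masks.
-/

open scoped RealInnerProductSpace

def IsCliffordSystem_s10 {κ V : Type*} [NormedAddCommGroup V] [InnerProductSpace ℝ V]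
    (P : κ → V →ₗ[ℝ] V) : Prop :=
  (∀ α x y, ⟪P α x, y⟫ = ⟪x, P α y⟫) ∧ (∀ α, P α ∘ₗ P α = LinearMap.id) ∧
    ∀ α β, α ≠ β → P α ∘ₗ P β = -(P β ∘ₗ P α)

theorem IsCliffordSystem_s10.conj {κ V W : Type*} [NormedAddCommGroup V] [InnerProductSpace ℝ V]
    [NormedAddCommGroup W] [InnerProductSpace ℝ W] {P : κ → V →ₗ[ℝ] V}
    (hP : IsCliffordSystem_s10 P) (e : V ≃ₗᵢ[ℝ] W) :
    IsCliffordSystem_s10 fun α => e.toLinearEquiv.conj (P α) := by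
  obtain ⟨hsymm, hsq, hanti⟩ := hP
  refine ⟨fun α x y => ?_, fun α => ?_, fun α β hαβ => ?_⟩
  · obtain ⟨x, rfl⟩ := e.surjective x
    obtain ⟨y, rfl⟩ := e.surjective y
    simp [hsymm]
  · rw [← LinearEquiv.conj_comp, hsq, LinearEquiv.conj_id]
  · rw [← LinearEquiv.conj_comp, ← LinearEquiv.conj_comp, hanti α β hαβ, map_neg]

def zmodTwoSign (t : ZMod 2) : ℝ := (-1) ^ t.val

theorem zmodTwoSign_add (s t : ZMod 2) :
    zmodTwoSign (s + t) = zmodTwoSign s * zmodTwoSign t := by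
  rw [zmodTwoSign, ZMod.val_add, ← neg_one_pow_eq_pow_mod_two, pow_add, zmodTwoSign, zmodTwoSign]

theorem zmodTwoSign_zero : zmodTwoSign 0 = 1 := pow_zero _

theorem zmodTwoSign_one : zmodTwoSign 1 = -1 := pow_one _

section Pauli

variable {ι : Type*} [Fintype ι]

def pauliOp (a m : ι → ZMod 2) :
    EuclideanSpace ℝ (ι → ZMod 2) →ₗ[ℝ] EuclideanSpace ℝ (ι → ZMod 2) where
  toFun x := WithLp.toLp 2 fun i => zmodTwoSign (a ⬝ᵥ i) * x (i + m)
  map_add' x y := by ext i; simp [mul_add]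
  map_smul' c x := by ext i; simp [mul_left_comm]

@[simp]
theorem pauliOp_apply (a m : ι → ZMod 2) (x : EuclideanSpace ℝ (ι → ZMod 2)) (i : ι → ZMod 2) :
    pauliOp a m x i = zmodTwoSign (a ⬝ᵥ i) * x (i + m) := rfl

theorem inner_pauliOp_left [DecidableEq ι] (a m : ι → ZMod 2)
    (x y : EuclideanSpace ℝ (ι → ZMod 2)) :
    ⟪pauliOp a m x, y⟫ = zmodTwoSign (a ⬝ᵥ m) * ⟪x, pauliOp a m y⟫ := by
  simp only [PiLp.inner_apply, RCLike.inner_apply, conj_trivial, pauliOp_apply, Finset.mul_sum]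
  rw [← Equiv.sum_comp (Equiv.addRight m)]
  refine Finset.sum_congr rfl fun i _ => ?_
  simp only [Equiv.coe_addRight, add_assoc, ZModModule.add_self, add_zero, dotProduct_add,
    zmodTwoSign_add]
  ring

theorem pauliOp_comp_pauliOp (a m b n : ι → ZMod 2) :
    pauliOp a m ∘ₗ pauliOp b n = zmodTwoSign (b ⬝ᵥ m) • pauliOp (a + b) (m + n) := by
  ext x i
  simp only [LinearMap.comp_apply, pauliOp_apply, LinearMap.smul_apply, PiLp.smul_apply,
    smul_eq_mul, dotProduct_add, add_dotProduct, zmodTwoSign_add, add_assoc]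
  ring

theorem pauliOp_zero_zero : pauliOp (0 : ι → ZMod 2) 0 = LinearMap.id := by
  ext x i
  simp [zmodTwoSign_zero]

theorem isCliffordSystem_pauliOp [DecidableEq ι] {κ : Type*} (a m : κ → ι → ZMod 2)
    (hsymm : ∀ α, a α ⬝ᵥ m α = 0)
    (hanti : ∀ α β, α ≠ β → a β ⬝ᵥ m α + a α ⬝ᵥ m β = 1) :
    IsCliffordSystem_s10 fun α => pauliOp (a α) (m α) := by
  refine ⟨fun α x y => ?_, fun α => ?_, fun α β hαβ => ?_⟩
  · rw [inner_pauliOp_left, hsymm, zmodTwoSign_zero, one_mul]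
  · rw [pauliOp_comp_pauliOp, hsymm, zmodTwoSign_zero, one_smul,
      ZModModule.add_self, ZModModule.add_self, pauliOp_zero_zero]
  · have hdot : a β ⬝ᵥ m α = 1 + a α ⬝ᵥ m β := by
      rw [← hanti α β hαβ, add_assoc, ZModModule.add_self, add_zero]
    have hsign : zmodTwoSign (a β ⬝ᵥ m α) = -zmodTwoSign (a α ⬝ᵥ m β) := by
      rw [hdot, zmodTwoSign_add, zmodTwoSign_one, neg_one_mul]
    rw [pauliOp_comp_pauliOp, pauliOp_comp_pauliOp, hsign, neg_smul, add_comm (a β),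
      add_comm (m β)]

end Pauli

-- Read along the five tensor factors `ℝ²`, the mask pairs `(a_k, m_k)` stand for the Pauli
-- letters `(0, 0) = 1`, `(1, 0) = Z`, `(0, 1) = X`, `(1, 1) = ZX`.
def pauliSignMasks : Fin 10 → Fin 5 → ZMod 2 :=
  ![![0, 0, 0, 0, 0], ![1, 0, 0, 0, 0], ![1, 1, 0, 0, 0], ![1, 0, 1, 0, 0], ![1, 1, 1, 0, 0],
    ![1, 0, 0, 1, 0], ![1, 1, 0, 1, 0], ![1, 0, 1, 1, 0], ![1, 1, 1, 1, 0], ![1, 1, 1, 1, 1]]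

def pauliFlipMasks : Fin 10 → Fin 5 → ZMod 2 :=
  ![![1, 0, 0, 0, 0], ![0, 0, 0, 0, 0], ![1, 1, 0, 0, 0], ![1, 1, 1, 0, 0], ![1, 0, 1, 1, 0],
    ![1, 1, 1, 1, 0], ![1, 0, 0, 1, 0], ![1, 1, 0, 1, 0], ![1, 0, 1, 0, 1], ![1, 0, 1, 0, 0]]

/-- The Euclidean space `ℝ^32` admits a Clifford system of 10 elements:
ten self-adjoint endomorphisms squaring to the identity and pairwise anti-commuting
(the Clifford system `C₉`). -/
theorem exists_cliffordSystem_ten_elements_on_R32 :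
    ∃ P : Fin 10 → (EuclideanSpace ℝ (Fin 32) →ₗ[ℝ] EuclideanSpace ℝ (Fin 32)),
      (∀ α, ∀ x y : EuclideanSpace ℝ (Fin 32), ⟪P α x, y⟫ = ⟪x, P α y⟫) ∧
      (∀ α, P α ∘ₗ P α = LinearMap.id) ∧
      (∀ α β, α ≠ β → P α ∘ₗ P β = -(P β ∘ₗ P α)) := by
  have hcard : Fintype.card (Fin 5 → ZMod 2) = 32 := by simp
  have hpauli := isCliffordSystem_pauliOp pauliSignMasks pauliFlipMasks (by decide) (by decide)
  exact ⟨_, hpauli.conj (LinearIsometryEquiv.piLpCongrLeft 2 ℝ ℝ (Fintype.equivFinOfCardEq hcard))⟩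
end

section
/- Let (I_1, …, I_9) be a Clifford system of 9 elements on a 16-dimensional real inner product space V, fix β ∈ {1, …, 9}, and let N ∈ V be a unit vector. Then the eight vectors (I_α ∘ I_β) N for α ≠ β are pairwise orthogonal unit vectors, each orthogonal to N; in particular they form an orthonormal system of tangent vectors to the unit sphere of V at N. -/
open scoped RealInnerProductSpace

/-- Let `(I 1, …, I 9)` be a Clifford system of 9 elements on a
16-dimensional real inner product space `V`, fix `β`, and let `N` be a unit vector.
Then the eight vectors `(I α ∘ I β) N`, `α ≠ β`, are unit vectors, pairwise orthogonal,
and each orthogonal to `N` (hence an orthonormal system of tangent vectors to the unit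
sphere at `N`). -/
theorem cliffordSystem_orthonormal_tangent_fields
    {V : Type*} [NormedAddCommGroup V] [InnerProductSpace ℝ V] [FiniteDimensional ℝ V]
    (hdim : Module.finrank ℝ V = 16)
    (I : Fin 9 → V →ₗ[ℝ] V)
    (hsa : ∀ α, ∀ x y : V, ⟪I α x, y⟫ = ⟪x, I α y⟫)
    (hsq : ∀ α, I α ∘ₗ I α = LinearMap.id)
    (hanti : ∀ α β, α ≠ β → I α ∘ₗ I β = -(I β ∘ₗ I α))
    (β : Fin 9) (N : V) (hN : ‖N‖ = 1) :
    (∀ α, α ≠ β → ‖I α (I β N)‖ = 1) ∧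
    (∀ α α', α ≠ β → α' ≠ β → α ≠ α' → ⟪I α (I β N), I α' (I β N)⟫ = 0) ∧
    (∀ α, α ≠ β → ⟪I α (I β N), N⟫ = 0) := by
  have hsq' : ∀ α (x : V), I α (I α x) = x := by
    intro α x
    have := congrArg (fun f => f x) (hsq α)
    simpa using this
  have hanti' : ∀ α γ, α ≠ γ → ∀ x : V, I α (I γ x) = -(I γ (I α x)) := by
    intro α γ h x
    have := congrArg (fun f => f x) (hanti α γ h)
    simpa using this
  -- each I α preserves norms
  have hiso : ∀ α (x : V), ‖I α x‖ = ‖x‖ := by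
    intro α x
    have h1 : ⟪I α x, I α x⟫ = ⟪x, x⟫ := by
      rw [hsa α, hsq' α]
    have h2 : ‖I α x‖ ^ 2 = ‖x‖ ^ 2 := by
      rw [← real_inner_self_eq_norm_sq, ← real_inner_self_eq_norm_sq]; exact h1
    nlinarith [norm_nonneg (I α x), norm_nonneg x, h2]
  refine ⟨fun α _ => by rw [hiso, hiso, hN], ?_, ?_⟩
  · intro α α' hαβ hα'β hαα'
    have key : ⟪I α (I β N), I α' (I β N)⟫ = -⟪I α (I β N), I α' (I β N)⟫ := by
      calc ⟪I α (I β N), I α' (I β N)⟫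
          = ⟪I β N, I α (I α' (I β N))⟫ := hsa α _ _
        _ = ⟪I β N, -(I α' (I α (I β N)))⟫ := by rw [hanti' α α' hαα']
        _ = -⟪I β N, I α' (I α (I β N))⟫ := by rw [inner_neg_right]
        _ = -⟪I α' (I β N), I α (I β N)⟫ := by rw [hsa α']
        _ = -⟪I α (I β N), I α' (I β N)⟫ := by rw [real_inner_comm]
    linarith
  · intro α hαβ
    have key : ⟪I α (I β N), N⟫ = -⟪I α (I β N), N⟫ := by
      calc ⟪I α (I β N), N⟫
          = ⟪I β N, I α N⟫ := hsa α _ _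
        _ = ⟪N, I β (I α N)⟫ := hsa β _ _
        _ = ⟪N, -(I α (I β N))⟫ := by rw [hanti' β α (Ne.symm hαβ)]
        _ = -⟪N, I α (I β N)⟫ := by rw [inner_neg_right]
        _ = -⟪I α (I β N), N⟫ := by rw [real_inner_comm]
    linarith
end

section
/- There exist 8 pointwise orthonormal tangent vector fields on the sphere S^15; that is, there exist continuous maps V_1, …, V_8 from the unit sphere S^15 of EuclideanSpace ℝ (Fin 16) to EuclideanSpace ℝ (Fin 16) such that for every p ∈ S^15 and all i, j ∈ {1, …, 8}: ⟨V_i(p), p⟩ = 0, and ⟨V_i(p), V_j(p)⟩ = 1 if i = j and 0 if i ≠ j. -/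
/-!
If `J₁, …, J_k` are anticommuting skew-adjoint operators with `Jᵢ² = -1`, then
`⟪Jᵢ p, Jⱼ p⟫ = -⟪p, Jᵢ Jⱼ p⟫` equals `‖p‖²` for `i = j` and is antisymmetric, hence zero, for
`i ≠ j`, while `⟪Jᵢ p, p⟫ = 0` by skew-adjointness; so `p ↦ Jᵢ p` are orthonormal tangent
fields on the unit sphere. Eight such operators on `ℝ¹⁶` come from the quaternions: left and
right multiplication by `i, j, k` give two commuting triples on `ℍ`, which the block
construction `diag(Aᵢ, -Aᵢ)`, `[[0, Bₖ], [Bₖ, 0]]`, `[[0, 1], [-1, 0]]` turns into seven on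
`ℍ²` (left multiplication by the imaginary octonions), and one more doubling gives eight
on `ℍ⁴ ≅ ℝ¹⁶`.
-/

open scoped RealInnerProductSpace Quaternion

noncomputable section

namespace Quaternion

theorem inner_mul_left_of_re_eq_zero {u : ℍ} (hu : u.re = 0) (x y : ℍ) :
    ⟪u * x, y⟫ = -⟪x, u * y⟫ := by
  simp only [inner_def, re_mul, star_mul, re_star, imI_mul, imJ_mul, imK_mul, imI_star,
    imJ_star, imK_star, hu]
  ring

theorem inner_mul_right_of_re_eq_zero {u : ℍ} (hu : u.re = 0) (x y : ℍ) :
    ⟪x * u, y⟫ = -⟪x, y * u⟫ := by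
  simp only [inner_def, re_mul, star_mul, re_star, imI_mul, imJ_mul, imK_mul, imI_star,
    imJ_star, imK_star, hu]
  ring

theorem mul_add_mul_swap_of_re_eq_zero {u v : ℍ} (hu : u.re = 0) (hv : v.re = 0) :
    u * v + v * u = ((-2 * ⟪u, v⟫ : ℝ) : ℍ) := by
  ext <;> simp [inner_def, hu, hv] <;> ring

theorem mul_self_eq_neg_one_of_re_eq_zero {u : ℍ} (hre : u.re = 0) (hu : ‖u‖ = 1) :
    u * u = -1 := by
  have h := mul_add_mul_swap_of_re_eq_zero hre hre
  rw [real_inner_self_eq_norm_sq, hu, ← two_smul ℝ] at h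
  refine smul_right_injective ℍ (two_ne_zero : (2 : ℝ) ≠ 0) ?_
  change (2 : ℝ) • (u * u) = (2 : ℝ) • (-1 : ℍ)
  rw [h]
  ext <;> norm_num

theorem mul_eq_neg_mul_of_inner_eq_zero {u v : ℍ} (hu : u.re = 0) (hv : v.re = 0)
    (huv : ⟪u, v⟫ = 0) : u * v = -(v * u) := by
  have h := mul_add_mul_swap_of_re_eq_zero hu hv
  rw [huv, mul_zero, coe_zero] at h
  exact eq_neg_of_add_eq_zero_left h

/-- The units `i, j, k`. -/
def imUnit : Fin 3 → ℍ :=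
  linearIsometryEquivTuple.symm ∘ EuclideanSpace.basisFun (Fin 4) ℝ ∘ Fin.succ

theorem re_imUnit (i : Fin 3) : (imUnit i).re = 0 := by
  simp [imUnit, (Fin.succ_ne_zero i).symm]

theorem orthonormal_imUnit : Orthonormal ℝ imUnit :=
  ((EuclideanSpace.basisFun (Fin 4) ℝ).orthonormal.comp _
    (Fin.succ_injective 3)).comp_linearIsometryEquiv _

end Quaternion

structure CliffordSystem (ι E : Type*) [NormedAddCommGroup E] [InnerProductSpace ℝ E] where
  gen : ι → E →ₗ[ℝ] E
  inner_gen_left : ∀ i x y, ⟪gen i x, y⟫ = -⟪x, gen i y⟫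
  gen_gen_self : ∀ i x, gen i (gen i x) = -x
  gen_gen_of_ne : ∀ i j, i ≠ j → ∀ x, gen i (gen j x) = -gen j (gen i x)

namespace CliffordSystem

variable {ι ι' κ E F : Type*} [NormedAddCommGroup E] [InnerProductSpace ℝ E]
  [NormedAddCommGroup F] [InnerProductSpace ℝ F]

theorem inner_gen_self (A : CliffordSystem ι E) (i : ι) (x : E) : ⟪A.gen i x, x⟫ = 0 := by
  linarith [A.inner_gen_left i x x, real_inner_comm x (A.gen i x)]

theorem inner_gen_gen [DecidableEq ι] (A : CliffordSystem ι E) (i j : ι) (x : E) :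
    ⟪A.gen i x, A.gen j x⟫ = if i = j then ‖x‖ ^ 2 else 0 := by
  split_ifs with hij
  · rw [hij, A.inner_gen_left, A.gen_gen_self, inner_neg_right, neg_neg,
      real_inner_self_eq_norm_sq]
  · have h : ⟪A.gen i x, A.gen j x⟫ = -⟪A.gen j x, A.gen i x⟫ := by
      rw [A.inner_gen_left, A.gen_gen_of_ne i j hij, inner_neg_right, neg_neg,
        ← neg_neg ⟪x, _⟫, ← A.inner_gen_left]
    linarith [real_inner_comm (A.gen j x) (A.gen i x)]

theorem norm_gen (A : CliffordSystem ι E) (i : ι) (x : E) : ‖A.gen i x‖ = ‖x‖ := by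
  classical
  have h := A.inner_gen_gen i i x
  rw [if_pos rfl, real_inner_self_eq_norm_sq] at h
  exact (pow_left_inj₀ (norm_nonneg _) (norm_nonneg _) two_ne_zero).1 h

theorem continuous_gen (A : CliffordSystem ι E) (i : ι) : Continuous (A.gen i) :=
  AddMonoidHomClass.continuous_of_bound (A.gen i) 1 fun x => by rw [A.norm_gen, one_mul]

theorem exists_orthonormal_tangent_fields [DecidableEq ι] (A : CliffordSystem ι E) :
    ∃ V : ι → (Metric.sphere (0 : E) 1 → E),
      (∀ i, Continuous (V i)) ∧ (∀ i p, ⟪V i p, (p : E)⟫ = 0) ∧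
      (∀ i j p, ⟪V i p, V j p⟫ = if i = j then 1 else 0) := by
  refine ⟨fun i p => A.gen i p, fun i => (A.continuous_gen i).comp continuous_subtype_val,
    fun i p => A.inner_gen_self i p, fun i j p => ?_⟩
  rw [A.inner_gen_gen, norm_eq_of_mem_sphere p, one_pow]

def reindex (A : CliffordSystem ι E) (e : ι ≃ ι') : CliffordSystem ι' E where
  gen i := A.gen (e.symm i)
  inner_gen_left _ := A.inner_gen_left _
  gen_gen_self _ := A.gen_gen_self _
  gen_gen_of_ne _ _ hij := A.gen_gen_of_ne _ _ (e.symm.injective.ne hij)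

def map (A : CliffordSystem ι E) (f : E ≃ₗᵢ[ℝ] F) : CliffordSystem ι F where
  gen i := f.toLinearEquiv.conj (A.gen i)
  inner_gen_left i x y := by
    simp only [LinearEquiv.conj_apply_apply, LinearIsometryEquiv.coe_toLinearEquiv]
    rw [f.inner_map_eq_flip, A.inner_gen_left, ← f.inner_map_map]
    simp
  gen_gen_self i x := by simp [LinearEquiv.conj_apply, A.gen_gen_self]
  gen_gen_of_ne i j hij x := by simp [LinearEquiv.conj_apply, A.gen_gen_of_ne i j hij]

def ofIsEmpty [IsEmpty ι] : CliffordSystem ι E where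
  gen := isEmptyElim
  inner_gen_left := isEmptyElim
  gen_gen_self := isEmptyElim
  gen_gen_of_ne := isEmptyElim

-- `[[0, B k], [B k, 0]]` anticommutes with `diag(A i, -A i)` because `B k` commutes with `A i`.
def double (A : CliffordSystem ι E) (B : CliffordSystem κ E)
    (hAB : ∀ i k x, A.gen i (B.gen k x) = B.gen k (A.gen i x)) :
    CliffordSystem (Option (ι ⊕ κ)) (WithLp 2 (E × E)) where
  gen
    | some (.inl i) => (WithLp.linearEquiv 2 ℝ (E × E)).symm.conj
        ((A.gen i).prodMap (-A.gen i))
    | some (.inr k) => (WithLp.linearEquiv 2 ℝ (E × E)).symm.conj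
        ((B.gen k ∘ₗ LinearMap.snd ℝ E E).prod (B.gen k ∘ₗ LinearMap.fst ℝ E E))
    | none => (WithLp.linearEquiv 2 ℝ (E × E)).symm.conj
        ((LinearMap.snd ℝ E E).prod (-LinearMap.fst ℝ E E))
  inner_gen_left := by
    rintro (_ | i | k) x y <;>
      simp [LinearEquiv.conj_apply_apply, A.inner_gen_left, B.inner_gen_left, add_comm]
  gen_gen_self := by
    rintro (_ | i | k) x <;> apply WithLp.ofLp_injective <;> ext <;>
      simp [LinearEquiv.conj_apply_apply, A.gen_gen_self, B.gen_gen_self]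
  gen_gen_of_ne := by
    rintro (_ | i | k) (_ | j | l) hne x <;> apply WithLp.ofLp_injective <;> ext <;>
      simp [LinearEquiv.conj_apply_apply, hAB] at hne ⊢
    all_goals first | exact A.gen_gen_of_ne i j hne _ | exact B.gen_gen_of_ne k l hne _

def quaternionLeft (u : ι → ℍ) (hre : ∀ i, (u i).re = 0) (hu : Orthonormal ℝ u) :
    CliffordSystem ι ℍ where
  gen i := LinearMap.mulLeft ℝ (u i)
  inner_gen_left i := Quaternion.inner_mul_left_of_re_eq_zero (hre i)
  gen_gen_self i x := by
    simp [← mul_assoc, Quaternion.mul_self_eq_neg_one_of_re_eq_zero (hre i) (hu.1 i)]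
  gen_gen_of_ne i j hij x := by
    simp [← mul_assoc, Quaternion.mul_eq_neg_mul_of_inner_eq_zero (hre i) (hre j) (hu.2 hij)]

def quaternionRight (u : ι → ℍ) (hre : ∀ i, (u i).re = 0) (hu : Orthonormal ℝ u) :
    CliffordSystem ι ℍ where
  gen i := LinearMap.mulRight ℝ (u i)
  inner_gen_left i := Quaternion.inner_mul_right_of_re_eq_zero (hre i)
  gen_gen_self i x := by
    simp [mul_assoc, Quaternion.mul_self_eq_neg_one_of_re_eq_zero (hre i) (hu.1 i)]
  gen_gen_of_ne i j hij x := by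
    simp [mul_assoc,
      Quaternion.mul_eq_neg_mul_of_inner_eq_zero (hre j) (hre i) (hu.2 hij.symm)]

end CliffordSystem

theorem nonempty_cliffordSystem_fin8_euclideanSpace_fin16 :
    Nonempty (CliffordSystem (Fin 8) (EuclideanSpace ℝ (Fin 16))) := by
  open Quaternion in
  let L := CliffordSystem.quaternionLeft imUnit re_imUnit orthonormal_imUnit
  let R := CliffordSystem.quaternionRight imUnit re_imUnit orthonormal_imUnit
  let O := L.double R fun _ _ _ => (mul_assoc _ _ _).symm
  let S := O.double (CliffordSystem.ofIsEmpty (ι := Empty)) fun _ k => isEmptyElim k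
  have hι : Fintype.card (Option (Option (Fin 3 ⊕ Fin 3) ⊕ Empty)) = 8 := rfl
  have hE : Module.finrank ℝ (WithLp 2 (WithLp 2 (ℍ × ℍ) × WithLp 2 (ℍ × ℍ))) = 16 := by
    simp [(WithLp.linearEquiv 2 ℝ _).finrank_eq, Quaternion.finrank_eq_four]
  exact ⟨(S.reindex (Fintype.equivFinOfCardEq hι)).map
    ((stdOrthonormalBasis ℝ _).reindex (finCongr hE)).repr⟩

end

/-- There exist 8 pointwise orthonormal tangent vector fields on the
sphere `S^15`: continuous maps `V i` from the unit sphere of `EuclideanSpace ℝ (Fin 16)`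
to `EuclideanSpace ℝ (Fin 16)` with `⟪V i p, p⟫ = 0` and `⟪V i p, V j p⟫ = δᵢⱼ`
at every point `p` of the sphere. -/
theorem exists_eight_orthonormal_tangent_fields_on_S15 :
    ∃ V : Fin 8 →
        (Metric.sphere (0 : EuclideanSpace ℝ (Fin 16)) 1 → EuclideanSpace ℝ (Fin 16)),
      (∀ i, Continuous (V i)) ∧
      (∀ i, ∀ p : Metric.sphere (0 : EuclideanSpace ℝ (Fin 16)) 1,
        ⟪V i p, (p : EuclideanSpace ℝ (Fin 16))⟫ = 0) ∧
      (∀ i j, ∀ p : Metric.sphere (0 : EuclideanSpace ℝ (Fin 16)) 1,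
        ⟪V i p, V j p⟫ = if i = j then 1 else 0) := by
  obtain ⟨A⟩ := nonempty_cliffordSystem_fin8_euclideanSpace_fin16
  exact A.exists_orthonormal_tangent_fields
end

section
/- There exist 9 pointwise orthonormal tangent vector fields on the sphere S^31; that is, there exist continuous maps V_1, …, V_9 from the unit sphere S^31 of EuclideanSpace ℝ (Fin 32) to EuclideanSpace ℝ (Fin 32) such that for every p ∈ S^31 and all i, j ∈ {1, …, 9}: ⟨V_i(p), p⟩ = 0, and ⟨V_i(p), V_j(p)⟩ = 1 if i = j and 0 if i ≠ j. -/
open scoped RealInnerProductSpace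

namespace S31Aux

def pi9 : Fin 9 → Fin 32 → Fin 32 :=
 ![![4,5,6,7,0,1,2,3,12,13,14,15,8,9,10,11,20,21,22,23,16,17,18,19,28,29,30,31,24,25,26,27],
  ![8,9,10,11,12,13,14,15,0,1,2,3,4,5,6,7,24,25,26,27,28,29,30,31,16,17,18,19,20,21,22,23],
  ![12,13,14,15,8,9,10,11,4,5,6,7,0,1,2,3,28,29,30,31,24,25,26,27,20,21,22,23,16,17,18,19],
  ![16,17,18,19,20,21,22,23,24,25,26,27,28,29,30,31,0,1,2,3,4,5,6,7,8,9,10,11,12,13,14,15],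
  ![20,21,22,23,16,17,18,19,28,29,30,31,24,25,26,27,4,5,6,7,0,1,2,3,12,13,14,15,8,9,10,11],
  ![24,25,26,27,28,29,30,31,16,17,18,19,20,21,22,23,8,9,10,11,12,13,14,15,0,1,2,3,4,5,6,7],
  ![28,29,30,31,24,25,26,27,20,21,22,23,16,17,18,19,12,13,14,15,8,9,10,11,4,5,6,7,0,1,2,3],
  ![2,3,0,1,6,7,4,5,10,11,8,9,14,15,12,13,18,19,16,17,22,23,20,21,26,27,24,25,30,31,28,29],
  ![3,2,1,0,7,6,5,4,11,10,9,8,15,14,13,12,19,18,17,16,23,22,21,20,27,26,25,24,31,30,29,28]]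

def sb : Fin 9 → Fin 32 → Bool :=
 ![![false,false,true,true,true,true,false,false,false,false,true,true,true,true,false,false,false,false,true,true,true,true,false,false,true,true,false,false,false,false,true,true],
  ![false,false,true,true,true,true,false,false,true,true,false,false,false,false,true,true,false,false,true,true,false,false,true,true,true,true,false,false,true,true,false,false],
  ![false,false,true,true,false,false,true,true,true,true,false,false,true,true,false,false,false,false,true,true,true,true,false,false,false,false,true,true,true,true,false,false],
  ![false,false,true,true,true,true,false,false,true,true,false,false,true,true,false,false,true,true,false,false,false,false,true,true,false,false,true,true,false,false,true,true],
  ![false,false,true,true,false,false,true,true,true,true,false,false,false,false,true,true,true,true,false,false,true,true,false,false,true,true,false,false,false,false,true,true],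
  ![false,false,true,true,false,false,true,true,false,false,true,true,true,true,false,false,true,true,false,false,false,false,true,true,true,true,false,false,true,true,false,false],
  ![false,false,true,true,true,true,false,false,false,false,true,true,false,false,true,true,true,true,false,false,true,true,false,false,false,false,true,true,true,true,false,false],
  ![false,false,true,true,false,false,true,true,false,false,true,true,false,false,true,true,false,false,true,true,false,false,true,true,false,false,true,true,false,false,true,true],
  ![false,true,false,true,false,true,false,true,false,true,false,true,false,true,false,true,false,true,false,true,false,true,false,true,false,true,false,true,false,true,false,true]]

noncomputable def eps (d : Fin 9) (k : Fin 32) : ℝ := if sb d k then 1 else -1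

lemma factA : ∀ (d : Fin 9) (k : Fin 32),
    pi9 d (pi9 d k) = k ∧ pi9 d k ≠ k ∧ sb d (pi9 d k) = !sb d k := by decide

lemma factC : ∀ (i j : Fin 9), i ≠ j → ∀ k : Fin 32,
    pi9 i (pi9 j k) = pi9 j (pi9 i k) ∧ pi9 i k ≠ pi9 j k ∧
    ((sb i (pi9 i (pi9 j k)) == sb j (pi9 i (pi9 j k))) = !(sb i k == sb j k)) := by decide

lemma eps_flip (d : Fin 9) (k : Fin 32) : eps d (pi9 d k) = -eps d k := by
  have h := (factA d k).2.2
  unfold eps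
  rw [h]
  cases sb d k <;> simp

lemma eps_sq (d : Fin 9) (k : Fin 32) : eps d k * eps d k = 1 := by
  unfold eps; cases sb d k <;> norm_num

lemma eps_cross {i j : Fin 9} (hij : i ≠ j) (k : Fin 32) :
    eps i (pi9 i (pi9 j k)) * eps j (pi9 i (pi9 j k)) = -(eps i k * eps j k) := by
  have h := (factC i j hij k).2.2
  unfold eps
  revert h
  cases sb i (pi9 i (pi9 j k)) <;> cases sb j (pi9 i (pi9 j k)) <;>
    cases sb i k <;> cases sb j k <;> simp

noncomputable def Vd (d : Fin 9)
    (p : Metric.sphere (0 : EuclideanSpace ℝ (Fin 32)) 1) : EuclideanSpace ℝ (Fin 32) :=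
  (EuclideanSpace.equiv (Fin 32) ℝ).symm
    (fun k => eps d k * (p : EuclideanSpace ℝ (Fin 32)) (pi9 d k))

lemma Vd_apply (d : Fin 9) (p : Metric.sphere (0 : EuclideanSpace ℝ (Fin 32)) 1)
    (k : Fin 32) : Vd d p k = eps d k * (p : EuclideanSpace ℝ (Fin 32)) (pi9 d k) := rfl

lemma Vd_continuous (d : Fin 9) : Continuous (Vd d) := by
  apply (EuclideanSpace.equiv (Fin 32) ℝ).symm.continuous.comp
  exact continuous_pi fun k => continuous_const.mul
    ((continuous_apply (pi9 d k)).comp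
      ((EuclideanSpace.equiv (Fin 32) ℝ).continuous.comp continuous_subtype_val))

lemma inner_sum (x y : EuclideanSpace ℝ (Fin 32)) : ⟪x, y⟫ = ∑ k, x k * y k := by
  simp [PiLp.inner_apply, RCLike.inner_apply, mul_comm]

lemma norm_one (p : Metric.sphere (0 : EuclideanSpace ℝ (Fin 32)) 1) :
    ⟪(p : EuclideanSpace ℝ (Fin 32)), (p : EuclideanSpace ℝ (Fin 32))⟫ = 1 := by
  have hp : ‖(p : EuclideanSpace ℝ (Fin 32))‖ = 1 :=
    mem_sphere_zero_iff_norm.mp p.2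
  rw [real_inner_self_eq_norm_mul_norm, hp, mul_one]

lemma tangent (d : Fin 9) (p : Metric.sphere (0 : EuclideanSpace ℝ (Fin 32)) 1) :
    ⟪Vd d p, (p : EuclideanSpace ℝ (Fin 32))⟫ = 0 := by
  rw [inner_sum]
  refine Finset.sum_involution (fun k _ => pi9 d k) ?_ ?_ (fun k _ => Finset.mem_univ _) ?_
  · intro k _
    have h1 : pi9 d (pi9 d k) = k := (factA d k).1
    simp only [Vd_apply]
    rw [h1, eps_flip d k]
    ring
  · intro k _ _
    exact (factA d k).2.1
  · intro k _
    exact (factA d k).1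

lemma pairing (i j : Fin 9) (p : Metric.sphere (0 : EuclideanSpace ℝ (Fin 32)) 1) :
    ⟪Vd i p, Vd j p⟫ = if i = j then 1 else 0 := by
  rw [inner_sum]
  rcases eq_or_ne i j with rfl | hij
  · rw [if_pos rfl]
    calc ∑ k, (Vd i p) k * (Vd i p) k
        = ∑ k, (fun m => (p : EuclideanSpace ℝ (Fin 32)) m
            * (p : EuclideanSpace ℝ (Fin 32)) m) (pi9 i k) := by
          refine Finset.sum_congr rfl fun k _ => ?_
          simp only [Vd_apply]
          calc (eps i k * (p : EuclideanSpace ℝ (Fin 32)) (pi9 i k))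
                * (eps i k * (p : EuclideanSpace ℝ (Fin 32)) (pi9 i k))
              = (eps i k * eps i k) * ((p : EuclideanSpace ℝ (Fin 32)) (pi9 i k)
                * (p : EuclideanSpace ℝ (Fin 32)) (pi9 i k)) := by ring
            _ = _ := by rw [eps_sq, one_mul]
      _ = ∑ k, (p : EuclideanSpace ℝ (Fin 32)) k * (p : EuclideanSpace ℝ (Fin 32)) k :=
          Fintype.sum_bijective (pi9 i)
            (Function.Involutive.bijective (fun k => (factA i k).1))
            _ _ (fun k => rfl)
      _ = 1 := by rw [← inner_sum]; exact norm_one p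
  · rw [if_neg hij]
    refine Finset.sum_involution (fun k _ => pi9 i (pi9 j k)) ?_ ?_
      (fun k _ => Finset.mem_univ _) ?_
    · intro k _
      have hcomm := (factC i j hij k).1
      have hii : pi9 i (pi9 i (pi9 j k)) = pi9 j k := (factA i (pi9 j k)).1
      have hjj : pi9 j (pi9 i (pi9 j k)) = pi9 i k := by
        rw [hcomm, (factA j (pi9 i k)).1]
      simp only [Vd_apply]
      rw [hii, hjj]
      have hs := eps_cross hij k
      linear_combination ((p : EuclideanSpace ℝ (Fin 32)) (pi9 j k)
        * (p : EuclideanSpace ℝ (Fin 32)) (pi9 i k)) * hs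
    · intro k _ _ hfix
      have hfix' : pi9 i (pi9 j k) = k := hfix
      have h2 : pi9 i (pi9 i (pi9 j k)) = pi9 i k := congrArg (pi9 i) hfix'
      rw [(factA i (pi9 j k)).1] at h2
      exact (factC i j hij k).2.1 h2.symm
    · intro k _
      have hcomm := (factC i j hij k).1
      calc pi9 i (pi9 j (pi9 i (pi9 j k)))
          = pi9 i (pi9 i (pi9 j (pi9 j k))) := by rw [hcomm, (factA j (pi9 i k)).1,
            (factA j k).1]
        _ = k := by rw [(factA j k).1, (factA i k).1]

end S31Aux

open S31Aux in
/-- There exist 9 pointwise orthonormal tangent vector fields on the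
sphere `S^31`: continuous maps `V i` from the unit sphere of `EuclideanSpace ℝ (Fin 32)`
to `EuclideanSpace ℝ (Fin 32)` with `⟪V i p, p⟫ = 0` and `⟪V i p, V j p⟫ = δᵢⱼ`
at every point `p` of the sphere. -/
theorem exists_nine_orthonormal_tangent_fields_on_S31 :
    ∃ V : Fin 9 →
        (Metric.sphere (0 : EuclideanSpace ℝ (Fin 32)) 1 → EuclideanSpace ℝ (Fin 32)),
      (∀ i, Continuous (V i)) ∧
      (∀ i, ∀ p : Metric.sphere (0 : EuclideanSpace ℝ (Fin 32)) 1,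
        ⟪V i p, (p : EuclideanSpace ℝ (Fin 32))⟫ = 0) ∧
      (∀ i j, ∀ p : Metric.sphere (0 : EuclideanSpace ℝ (Fin 32)) 1,
        ⟪V i p, V j p⟫ = if i = j then 1 else 0) := by
  exact ⟨Vd, Vd_continuous, tangent, pairing⟩
end

section
/- There exist 11 pointwise orthonormal tangent vector fields on the sphere S^63; that is, there exist continuous maps V_1, …, V_11 from the unit sphere S^63 of EuclideanSpace ℝ (Fin 64) to EuclideanSpace ℝ (Fin 64) such that for every p ∈ S^63 and all i, j ∈ {1, …, 11}: ⟨V_i(p), p⟩ = 0, and ⟨V_i(p), V_j(p)⟩ = 1 if i = j and 0 if i ≠ j. -/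
/-!
Take the fields `p ↦ T_a p` for real Pauli operators
`T_{c,d} x = (m ↦ (-1) ^ (d ⬝ᵥ m) * x (m + c))` on `ℝ^(𝔽₂⁶) ≅ ℝ⁶⁴`. Each of them is an
isometry, and reindexing the sum `⟪T_{c,d} x, T_{c',d'} x⟫` by `m ↦ m + c + c'` multiplies
it by `(-1) ^ ((d + d') ⬝ᵥ (c + c'))`, so it vanishes whenever that exponent is odd; with
`(c', d') = 0` this gives tangency when `d ⬝ᵥ c` is odd. So it suffices to exhibit eleven
pairs `(c_a, d_a)` with these parities, which is a finite check.
-/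

open scoped RealInnerProductSpace

def HasOrthonormalTangentFields (E : Type*) [NormedAddCommGroup E] [InnerProductSpace ℝ E]
    (κ : Type*) [DecidableEq κ] : Prop :=
  ∃ V : κ → (Metric.sphere (0 : E) 1 → E), (∀ a, Continuous (V a)) ∧
    (∀ a, ∀ p : Metric.sphere (0 : E) 1, ⟪V a p, (p : E)⟫ = 0) ∧
    (∀ a b, ∀ p : Metric.sphere (0 : E) 1, ⟪V a p, V b p⟫ = if a = b then 1 else 0)

theorem HasOrthonormalTangentFields.of_linearIsometryEquiv {E F : Type*}
    [NormedAddCommGroup E] [InnerProductSpace ℝ E]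
    [NormedAddCommGroup F] [InnerProductSpace ℝ F] {κ : Type*} [DecidableEq κ]
    (e : E ≃ₗᵢ[ℝ] F) (h : HasOrthonormalTangentFields F κ) :
    HasOrthonormalTangentFields E κ := by
  obtain ⟨V, hcont, htan, horth⟩ := h
  let ep : Metric.sphere (0 : E) 1 → Metric.sphere (0 : F) 1 := fun p => ⟨e p, by simp⟩
  have hep : Continuous ep := by fun_prop
  refine ⟨fun a p => e.symm (V a (ep p)), fun a => ?_, fun a p => ?_, fun a b p => ?_⟩
  · exact e.symm.continuous.comp ((hcont a).comp hep)
  · rw [LinearIsometryEquiv.inner_map_eq_flip, LinearIsometryEquiv.symm_symm]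
    exact htan a (ep p)
  · rw [LinearIsometryEquiv.inner_map_map]
    exact horth a b (ep p)

namespace Pauli

def sign (a : ZMod 2) : ℝ := (-1) ^ a.val

theorem sign_add (a b : ZMod 2) : sign (a + b) = sign a * sign b := by
  rw [sign, sign, sign, ZMod.val_add, ← pow_add, ← neg_one_pow_eq_pow_mod_two]

theorem sign_mul_self (a : ZMod 2) : sign a * sign a = 1 := by
  rw [← sign_add, ZModModule.add_self, sign, ZMod.val_zero, pow_zero]

theorem sign_one : sign 1 = -1 := by
  rw [sign, ZMod.val_one, pow_one]

variable {ι : Type*} [Fintype ι]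

def op (c d : ι → ZMod 2) (x : EuclideanSpace ℝ (ι → ZMod 2)) :
    EuclideanSpace ℝ (ι → ZMod 2) :=
  WithLp.toLp 2 fun m => sign (d ⬝ᵥ m) * x (m + c)

theorem continuous_op (c d : ι → ZMod 2) : Continuous (op c d) := by
  unfold op
  fun_prop

theorem op_zero_zero (x : EuclideanSpace ℝ (ι → ZMod 2)) : op 0 0 x = x := by
  ext m
  simp [op, sign]

variable [DecidableEq ι]

theorem inner_op_self (c d : ι → ZMod 2) (x : EuclideanSpace ℝ (ι → ZMod 2)) :
    ⟪op c d x, op c d x⟫ = ⟪x, x⟫ := by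
  simp only [op, PiLp.inner_apply, RCLike.inner_apply, conj_trivial]
  refine (Finset.sum_congr rfl fun m _ => ?_).trans
    (Equiv.sum_comp (Equiv.addRight c) fun m => x m * x m)
  simp only [Equiv.coe_addRight]
  linear_combination x (m + c) * x (m + c) * sign_mul_self (d ⬝ᵥ m)

theorem inner_op_op (c d c' d' : ι → ZMod 2) (x : EuclideanSpace ℝ (ι → ZMod 2)) :
    ⟪op c d x, op c' d' x⟫ = sign ((d + d') ⬝ᵥ (c + c')) * ⟪op c d x, op c' d' x⟫ := by
  simp only [op, PiLp.inner_apply, RCLike.inner_apply, conj_trivial, Finset.mul_sum]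
  rw [← Equiv.sum_comp (Equiv.addRight (c + c'))]
  refine Finset.sum_congr rfl fun m _ => ?_
  have hc : m + (c + c') + c = m + c' := by
    rw [add_comm c c', ← add_assoc, add_assoc, ZModModule.add_self, add_zero]
  have hc' : m + (c + c') + c' = m + c := by
    rw [← add_assoc, add_assoc, ZModModule.add_self, add_zero]
  simp only [Equiv.coe_addRight, hc, hc', dotProduct_add, add_dotProduct, sign_add]
  ring

theorem inner_op_op_eq_zero {c d c' d' : ι → ZMod 2} (h : (d + d') ⬝ᵥ (c + c') = 1)
    (x : EuclideanSpace ℝ (ι → ZMod 2)) : ⟪op c d x, op c' d' x⟫ = 0 := by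
  have h_neg := inner_op_op c d c' d' x
  rw [h, sign_one] at h_neg
  linarith

theorem inner_op_eq_zero {c d : ι → ZMod 2} (h : d ⬝ᵥ c = 1)
    (x : EuclideanSpace ℝ (ι → ZMod 2)) : ⟪op c d x, x⟫ = 0 := by
  simpa only [op_zero_zero] using
    inner_op_op_eq_zero (c' := 0) (d' := 0) (by simpa only [add_zero]) x

theorem hasOrthonormalTangentFields {κ : Type*} [DecidableEq κ] (c d : κ → ι → ZMod 2)
    (hskew : ∀ a, d a ⬝ᵥ c a = 1)
    (hanti : ∀ a b, a ≠ b → (d a + d b) ⬝ᵥ (c a + c b) = 1) :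
    HasOrthonormalTangentFields (EuclideanSpace ℝ (ι → ZMod 2)) κ := by
  refine ⟨fun a p => op (c a) (d a) p,
    fun a => (continuous_op _ _).comp continuous_subtype_val,
    fun a p => inner_op_eq_zero (hskew a) p, fun a b p => ?_⟩
  split_ifs with hab
  · subst hab
    rw [inner_op_self, real_inner_self_eq_norm_sq, mem_sphere_zero_iff_norm.mp p.2, one_pow]
  · exact inner_op_op_eq_zero (hanti a b hab) p

end Pauli

namespace HurwitzRadon64

def bitVec (n : ℕ) : Fin 6 → ZMod 2 := fun i => if n.testBit i then 1 else 0

def flipMask (a : Fin 11) : Fin 6 → ZMod 2 :=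
  bitVec (![1, 3, 6, 2, 4, 7, 13, 5, 29, 61, 45] a)

def signMask (a : Fin 11) : Fin 6 → ZMod 2 :=
  bitVec (![1, 2, 3, 7, 5, 4, 6, 14, 30, 46, 62] a)

theorem hasOrthonormalTangentFields :
    HasOrthonormalTangentFields (EuclideanSpace ℝ (Fin 64)) (Fin 11) := by
  have hcard : Fintype.card (Fin 64) = Fintype.card (Fin 6 → ZMod 2) := by simp
  exact (Pauli.hasOrthonormalTangentFields flipMask signMask (by decide) (by decide))
    |>.of_linearIsometryEquiv (.piLpCongrLeft 2 ℝ ℝ (Fintype.equivOfCardEq hcard))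

end HurwitzRadon64

/-- There exist 11 pointwise orthonormal tangent vector fields on the
sphere `S^63`: continuous maps `V i` from the unit sphere of `EuclideanSpace ℝ (Fin 64)`
to `EuclideanSpace ℝ (Fin 64)` with `⟪V i p, p⟫ = 0` and `⟪V i p, V j p⟫ = δᵢⱼ`
at every point `p` of the sphere. -/
theorem exists_eleven_orthonormal_tangent_fields_on_S63 :
    ∃ V : Fin 11 →
        (Metric.sphere (0 : EuclideanSpace ℝ (Fin 64)) 1 → EuclideanSpace ℝ (Fin 64)),
      (∀ i, Continuous (V i)) ∧
      (∀ i, ∀ p : Metric.sphere (0 : EuclideanSpace ℝ (Fin 64)) 1,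
        ⟪V i p, (p : EuclideanSpace ℝ (Fin 64))⟫ = 0) ∧
      (∀ i j, ∀ p : Metric.sphere (0 : EuclideanSpace ℝ (Fin 64)) 1,
        ⟪V i p, V j p⟫ = if i = j then 1 else 0) :=
  HurwitzRadon64.hasOrthonormalTangentFields
end

section
/- There exist 15 pointwise orthonormal tangent vector fields on the sphere S^127; that is, there exist continuous maps V_1, …, V_15 from the unit sphere S^127 of EuclideanSpace ℝ (Fin 128) to EuclideanSpace ℝ (Fin 128) such that for every p ∈ S^127 and all i, j ∈ {1, …, 15}: ⟨V_i(p), p⟩ = 0, and ⟨V_i(p), V_j(p)⟩ = 1 if i = j and 0 if i ≠ j. -/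
/-!
Index the coordinates of `ℝ¹²⁸` by `(ZMod 2)⁷`. For `a, c ∈ (ZMod 2)⁷` the signed permutation
`f ↦ (v ↦ (-1)^(a·v) f(v + c))` is orthogonal; it is skew exactly when `a·c = 1`, and two skew ones
anticommute exactly when `(a + a')·(c + c') = 1`. Fifteen pairs `(a, c)` meeting these
conditions give a Hurwitz–Radon family `J₁, …, J₁₅`, and `p ↦ Jᵢ p` are the required fields.
-/

open scoped RealInnerProductSpace

open Metric

theorem sum_eq_zero_of_apply_add_right_eq_neg {G M : Type*} [AddGroup G] [Fintype G]
    [AddCommGroup M] [IsAddTorsionFree M] (f : G → M) (d : G) (h : ∀ v, f (v + d) = -f v) :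
    ∑ v, f v = 0 :=
  self_eq_neg.mp <| calc
    ∑ v, f v = ∑ v, f (v + d) := (Equiv.sum_comp (Equiv.addRight d) f).symm
    _ = -∑ v, f v := by simp only [h, Finset.sum_neg_distrib]

section HurwitzRadon

variable {ι E F : Type*} [DecidableEq ι] [NormedAddCommGroup E] [InnerProductSpace ℝ E]
  [NormedAddCommGroup F] [InnerProductSpace ℝ F]

/-- The pointwise form of: every `J i` is orthogonal and skew-adjoint, and distinct `J i`
anticommute. -/
def IsHurwitzRadonFamily (J : ι → E →L[ℝ] E) : Prop :=
  (∀ i x, ⟪J i x, x⟫ = 0) ∧ ∀ i j x, ⟪J i x, J j x⟫ = if i = j then ‖x‖ ^ 2 else 0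

namespace IsHurwitzRadonFamily

variable {J : ι → E →L[ℝ] E}

theorem conj (hJ : IsHurwitzRadonFamily J) (e : E ≃ₗᵢ[ℝ] F) :
    IsHurwitzRadonFamily fun i => e.toContinuousLinearEquiv.conjContinuousAlgEquiv (J i) := by
  refine ⟨fun i x => ?_, fun i j x => ?_⟩
  · simpa [e.inner_map_eq_flip] using hJ.1 i (e.symm x)
  · simpa [e.inner_map_map] using hJ.2 i j (e.symm x)

theorem exists_orthonormal_tangent_fields (hJ : IsHurwitzRadonFamily J) :
    ∃ V : ι → (sphere (0 : E) 1 → E),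
      (∀ i, Continuous (V i)) ∧
      (∀ i, ∀ p : sphere (0 : E) 1, ⟪V i p, (p : E)⟫ = 0) ∧
      (∀ i j, ∀ p : sphere (0 : E) 1, ⟪V i p, V j p⟫ = if i = j then 1 else 0) := by
  refine ⟨fun i p => J i p, fun i => (J i).continuous.comp continuous_subtype_val,
    fun i p => hJ.1 i p, fun i j p => ?_⟩
  simp [hJ.2 i j p, norm_eq_of_mem_sphere p]

end IsHurwitzRadonFamily

end HurwitzRadon

theorem AddChar.mul_self_eq_one {G M : Type*} [AddCommGroup G] [Module (ZMod 2) G]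
    [CommMonoid M] (χ : AddChar G M) (v : G) : χ v * χ v = 1 := by
  rw [← χ.map_add_eq_mul, ZModModule.add_self, χ.map_zero_eq_one]

section SignedShift

variable {G : Type*} [AddCommGroup G] [Fintype G]

noncomputable def signedShift (χ : AddChar G ℝ) (c : G) :
    EuclideanSpace ℝ G →L[ℝ] EuclideanSpace ℝ G :=
  LinearMap.toContinuousLinearMap
    { toFun := fun f => WithLp.toLp 2 fun v => χ v * f (v + c)
      map_add' := fun f g => by ext v; simp only [PiLp.add_apply]; ring
      map_smul' := fun r f => by
        ext v; simp only [PiLp.smul_apply, smul_eq_mul, RingHom.id_apply]; ring }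

@[simp]
theorem signedShift_apply (χ : AddChar G ℝ) (c : G) (f : EuclideanSpace ℝ G) (v : G) :
    signedShift χ c f v = χ v * f (v + c) :=
  rfl

theorem inner_signedShift_signedShift (χ ψ : AddChar G ℝ) (c d : G) (f : EuclideanSpace ℝ G) :
    ⟪signedShift χ c f, signedShift ψ d f⟫ = ∑ v, χ v * ψ v * f (v + c) * f (v + d) := by
  simp only [PiLp.inner_apply, signedShift_apply, RCLike.inner_apply, conj_trivial]
  exact Finset.sum_congr rfl fun v _ => by ring

variable [Module (ZMod 2) G]

theorem inner_signedShift_self (χ : AddChar G ℝ) (c : G) (f : EuclideanSpace ℝ G) :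
    ⟪signedShift χ c f, signedShift χ c f⟫ = ‖f‖ ^ 2 := by
  rw [EuclideanSpace.norm_sq_eq]
  simp only [inner_signedShift_signedShift, χ.mul_self_eq_one, one_mul, ← sq, Real.norm_eq_abs,
    sq_abs]
  exact Equiv.sum_comp (Equiv.addRight c) fun v => f v ^ 2

theorem inner_signedShift_left_eq_zero {χ : AddChar G ℝ} {c : G} (hχc : χ c = -1)
    (f : EuclideanSpace ℝ G) : ⟪signedShift χ c f, f⟫ = 0 := by
  simp only [PiLp.inner_apply, signedShift_apply, RCLike.inner_apply, conj_trivial]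
  refine sum_eq_zero_of_apply_add_right_eq_neg _ c fun v => ?_
  rw [add_assoc, ZModModule.add_self, add_zero, χ.map_add_eq_mul, hχc]
  ring

theorem inner_signedShift_signedShift_eq_zero {χ ψ : AddChar G ℝ} {c d : G}
    (h : χ (c + d) * ψ (c + d) = -1) (f : EuclideanSpace ℝ G) :
    ⟪signedShift χ c f, signedShift ψ d f⟫ = 0 := by
  rw [inner_signedShift_signedShift]
  refine sum_eq_zero_of_apply_add_right_eq_neg _ (c + d) fun v => ?_
  have hc : v + (c + d) + c = v + d := by
    rw [add_comm c d, add_assoc, add_assoc, ZModModule.add_self, add_zero]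
  have hd : v + (c + d) + d = v + c := by
    rw [add_assoc, add_assoc, ZModModule.add_self, add_zero]
  rw [hc, hd, χ.map_add_eq_mul, ψ.map_add_eq_mul]
  linear_combination χ v * ψ v * f (v + c) * f (v + d) * h

theorem isHurwitzRadonFamily_signedShift {ι : Type*} [DecidableEq ι] (χ : ι → AddChar G ℝ)
    (c : ι → G) (hskew : ∀ i, χ i (c i) = -1)
    (hanti : ∀ i j, i ≠ j → χ i (c i + c j) * χ j (c i + c j) = -1) :
    IsHurwitzRadonFamily fun i => signedShift (χ i) (c i) := by
  refine ⟨fun i => inner_signedShift_left_eq_zero (hskew i), fun i j f => ?_⟩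
  split_ifs with hij
  · subst hij
    exact inner_signedShift_self _ _ f
  · exact inner_signedShift_signedShift_eq_zero (hanti i j hij) f

end SignedShift

section SignDotChar

variable {n : Type*} [Fintype n]

noncomputable def signDotChar (a : n → ZMod 2) : AddChar (n → ZMod 2) ℝ where
  toFun v := (-1) ^ (a ⬝ᵥ v).val
  map_zero_eq_one' := by rw [dotProduct_zero, ZMod.val_zero, pow_zero]
  map_add_eq_mul' v w := by
    rw [dotProduct_add, ZMod.val_add, ← neg_one_pow_eq_pow_mod_two, pow_add]

theorem signDotChar_apply (a v : n → ZMod 2) : signDotChar a v = (-1) ^ (a ⬝ᵥ v).val := rfl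

theorem signDotChar_of_dotProduct_eq_one {a v : n → ZMod 2} (h : a ⬝ᵥ v = 1) :
    signDotChar a v = -1 := by
  rw [signDotChar_apply, h, ZMod.val_one, pow_one]

theorem signDotChar_mul_signDotChar (a b v : n → ZMod 2) :
    signDotChar a v * signDotChar b v = signDotChar (a + b) v := by
  simp only [signDotChar_apply, add_dotProduct, ZMod.val_add, ← pow_add,
    ← neg_one_pow_eq_pow_mod_two]

end SignDotChar

/- Under `ℝ^((ZMod 2)⁷) ≅ (ℝ²)^⊗7`, row `i` of these two tables is the real Pauli string
`⊗ₖ Z^(aᵢₖ) X^(cᵢₖ)`, with `a = hurwitzRadonSign`, `c = hurwitzRadonShift`. -/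
def hurwitzRadonSign : Fin 15 → Fin 7 → ZMod 2 :=
  ![![0, 1, 0, 0, 1, 0, 0],
    ![1, 1, 0, 0, 0, 1, 0],
    ![1, 1, 1, 0, 1, 1, 0],
    ![1, 1, 1, 0, 1, 1, 1],
    ![0, 0, 0, 0, 0, 0, 1],
    ![0, 1, 0, 0, 0, 0, 1],
    ![0, 0, 1, 1, 1, 1, 0],
    ![1, 1, 0, 1, 0, 0, 0],
    ![1, 0, 1, 0, 0, 1, 0],
    ![0, 0, 1, 0, 1, 0, 0],
    ![1, 0, 1, 0, 1, 1, 1],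
    ![1, 0, 0, 0, 0, 0, 0],
    ![1, 0, 0, 1, 1, 1, 0],
    ![0, 1, 1, 0, 1, 1, 0],
    ![0, 1, 1, 1, 0, 0, 0]]

def hurwitzRadonShift : Fin 15 → Fin 7 → ZMod 2 :=
  ![![0, 0, 0, 1, 1, 0, 0],
    ![1, 0, 0, 0, 1, 0, 0],
    ![0, 0, 0, 1, 0, 1, 0],
    ![1, 0, 1, 1, 0, 0, 1],
    ![0, 1, 0, 1, 0, 0, 1],
    ![0, 0, 1, 1, 1, 1, 1],
    ![0, 1, 1, 1, 0, 1, 0],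
    ![1, 1, 1, 1, 1, 0, 1],
    ![1, 0, 1, 0, 1, 1, 1],
    ![0, 0, 1, 1, 0, 0, 1],
    ![1, 1, 0, 1, 1, 1, 0],
    ![1, 0, 0, 1, 1, 1, 1],
    ![1, 0, 1, 1, 1, 0, 0],
    ![1, 0, 0, 1, 0, 1, 0],
    ![0, 0, 1, 0, 0, 1, 1]]

theorem hurwitzRadonSign_dotProduct_hurwitzRadonShift (i : Fin 15) :
    hurwitzRadonSign i ⬝ᵥ hurwitzRadonShift i = 1 := by
  decide +revert

theorem add_hurwitzRadonSign_dotProduct_add_hurwitzRadonShift {i j : Fin 15} (hij : i ≠ j) :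
    (hurwitzRadonSign i + hurwitzRadonSign j) ⬝ᵥ (hurwitzRadonShift i + hurwitzRadonShift j) =
      1 := by
  decide +revert

/-- There exist 15 pointwise orthonormal tangent vector fields on the
sphere `S^127`: continuous maps `V i` from the unit sphere of `EuclideanSpace ℝ (Fin 128)`
to `EuclideanSpace ℝ (Fin 128)` with `⟪V i p, p⟫ = 0` and `⟪V i p, V j p⟫ = δᵢⱼ`
at every point `p` of the sphere. -/
theorem exists_fifteen_orthonormal_tangent_fields_on_S127 :
    ∃ V : Fin 15 →
        (Metric.sphere (0 : EuclideanSpace ℝ (Fin 128)) 1 → EuclideanSpace ℝ (Fin 128)),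
      (∀ i, Continuous (V i)) ∧
      (∀ i, ∀ p : Metric.sphere (0 : EuclideanSpace ℝ (Fin 128)) 1,
        ⟪V i p, (p : EuclideanSpace ℝ (Fin 128))⟫ = 0) ∧
      (∀ i j, ∀ p : Metric.sphere (0 : EuclideanSpace ℝ (Fin 128)) 1,
        ⟪V i p, V j p⟫ = if i = j then 1 else 0) := by
  have hJ : IsHurwitzRadonFamily fun i =>
      signedShift (signDotChar (hurwitzRadonSign i)) (hurwitzRadonShift i) := by
    refine isHurwitzRadonFamily_signedShift _ _
      (fun i => signDotChar_of_dotProduct_eq_one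
        (hurwitzRadonSign_dotProduct_hurwitzRadonShift i))
      fun i j hij => ?_
    rw [signDotChar_mul_signDotChar]
    exact signDotChar_of_dotProduct_eq_one
      (add_hurwitzRadonSign_dotProduct_add_hurwitzRadonShift hij)
  let e : EuclideanSpace ℝ (Fin 7 → ZMod 2) ≃ₗᵢ[ℝ] EuclideanSpace ℝ (Fin 128) :=
    LinearIsometryEquiv.piLpCongrLeft 2 ℝ ℝ (Fintype.equivFinOfCardEq (by simp))
  exact (hJ.conj e).exists_orthonormal_tangent_fields
end

section
/- There exist 17 pointwise orthonormal tangent vector fields on the sphere S^511; that is, there exist continuous maps V_1, …, V_17 from the unit sphere S^511 of EuclideanSpace ℝ (Fin 512) to EuclideanSpace ℝ (Fin 512) such that for every p ∈ S^511 and all i, j ∈ {1, …, 17}: ⟨V_i(p), p⟩ = 0, and ⟨V_i(p), V_j(p)⟩ = 1 if i = j and 0 if i ≠ j. -/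
/-!
Index the coordinates of `ℝ^(2^n)` by `𝔽₂^n`, written as binary digits. For `(m, d) ∈ 𝔽₂^n × 𝔽₂^n`
the signed permutation `A_(m,d) p x = (-1)^(x·d) p (m ⊕ x)` is orthogonal, and
`⟪A_v p, A_w p⟫ = 0` for every `p` as soon as `(m ⊕ m')·(d ⊕ d')` is odd, for `v = (m, d)` and
`w = (m', d')`: the substitution `x ↦ m ⊕ m' ⊕ x` negates each term of the sum. Taking
`w = (0, 0)`, `A_v` is skew when `m·d` is odd. Hence seventeen pairs `v_i` with `m_i·d_i` odd and
all `(m_i ⊕ m_j)·(d_i ⊕ d_j)` odd give the orthonormal tangent fields `p ↦ A_(v_i) p` on `S^511`;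
such pairs are exhibited for `n = 9` and checked by computation.
-/

open scoped RealInnerProductSpace

section SignedPerm

variable {ι : Type*}

theorem Equiv.Perm.sum_eq_zero_of_comp_eq_neg [Fintype ι] (ρ : Equiv.Perm ι) {f : ι → ℝ}
    (hf : ∀ x, f (ρ x) = -f x) : ∑ x, f x = 0 := by
  have h := Equiv.sum_comp ρ f
  simp only [hf, Finset.sum_neg_distrib] at h
  linarith

def signedPerm (σ : Equiv.Perm ι) (s : ι → ℝ) :
    EuclideanSpace ℝ ι →ₗ[ℝ] EuclideanSpace ℝ ι where
  toFun p := WithLp.toLp 2 fun x => s x * p (σ x)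
  map_add' p q := by ext x; simp [mul_add]
  map_smul' c p := by ext x; simp [mul_left_comm]

@[simp]
theorem signedPerm_apply (σ : Equiv.Perm ι) (s : ι → ℝ) (p : EuclideanSpace ℝ ι) (x : ι) :
    signedPerm σ s p x = s x * p (σ x) := rfl

variable [Fintype ι]

theorem inner_signedPerm (σ τ : Equiv.Perm ι) (s t : ι → ℝ) (p : EuclideanSpace ℝ ι) :
    ⟪signedPerm σ s p, signedPerm τ t p⟫ = ∑ x, s x * t x * (p (σ x) * p (τ x)) := by
  simp only [PiLp.inner_apply, signedPerm_apply, Real.inner_apply]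
  exact Finset.sum_congr rfl fun x _ => by ring

theorem inner_signedPerm_self (σ : Equiv.Perm ι) {s : ι → ℝ} (hs : ∀ x, s x * s x = 1)
    (p : EuclideanSpace ℝ ι) : ⟪signedPerm σ s p, signedPerm σ s p⟫ = ⟪p, p⟫ := by
  rw [inner_signedPerm]
  simp only [hs, one_mul, PiLp.inner_apply, Real.inner_apply]
  exact Equiv.sum_comp σ fun x => p x * p x

theorem inner_signedPerm_eq_zero {σ τ : Equiv.Perm ι} {s t : ι → ℝ} (ρ : Equiv.Perm ι)
    (hσ : ∀ x, σ (ρ x) = τ x) (hτ : ∀ x, τ (ρ x) = σ x)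
    (hst : ∀ x, s (ρ x) * t (ρ x) = -(s x * t x)) (p : EuclideanSpace ℝ ι) :
    ⟪signedPerm σ s p, signedPerm τ t p⟫ = 0 := by
  rw [inner_signedPerm]
  refine ρ.sum_eq_zero_of_comp_eq_neg fun x => ?_
  rw [hσ, hτ, hst]
  ring

end SignedPerm

section BinaryModel

def bitDot : ℕ → ℕ → ℕ → Bool
  | 0, _, _ => false
  | n + 1, a, b => (a.testBit n && b.testBit n) ^^ bitDot n a b

theorem bitDot_comm (n a b : ℕ) : bitDot n a b = bitDot n b a := by
  induction n with
  | zero => rfl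
  | succ n ih => simp only [bitDot, ih, Bool.and_comm]

theorem bitDot_xor_left (n a b c : ℕ) :
    bitDot n (a ^^^ b) c = (bitDot n a c ^^ bitDot n b c) := by
  induction n with
  | zero => rfl
  | succ n ih =>
    simp only [bitDot, ih, Nat.testBit_xor, Bool.and_xor_distrib_right, Bool.xor_assoc,
      Bool.xor_left_comm]

theorem bitDot_xor_right (n a b c : ℕ) :
    bitDot n a (b ^^^ c) = (bitDot n a b ^^ bitDot n a c) := by
  simp only [bitDot_comm n a, bitDot_xor_left]

@[simp]
theorem bitDot_zero_right (n a : ℕ) : bitDot n a 0 = false := by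
  induction n with
  | zero => rfl
  | succ n ih => simp [bitDot, ih]

def boolSign (b : Bool) : ℝ := if b then -1 else 1

theorem boolSign_xor (a b : Bool) : boolSign (a ^^ b) = boolSign a * boolSign b := by
  cases a <;> cases b <;> norm_num [boolSign]

theorem boolSign_mul_self (b : Bool) : boolSign b * boolSign b = 1 := by
  cases b <;> norm_num [boolSign]

variable {n : ℕ}

def xorSignedPerm (v : Fin (2 ^ n) × Fin (2 ^ n)) :
    EuclideanSpace ℝ (Fin (2 ^ n)) →ₗ[ℝ] EuclideanSpace ℝ (Fin (2 ^ n)) :=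
  signedPerm (Equiv.xor v.1) fun x => boolSign (bitDot n x v.2)

@[simp]
theorem xorSignedPerm_zero : xorSignedPerm (0 : Fin (2 ^ n) × Fin (2 ^ n)) = LinearMap.id := by
  ext p x
  simp [xorSignedPerm, boolSign]

theorem inner_xorSignedPerm_self (v : Fin (2 ^ n) × Fin (2 ^ n))
    (p : EuclideanSpace ℝ (Fin (2 ^ n))) : ⟪xorSignedPerm v p, xorSignedPerm v p⟫ = ⟪p, p⟫ :=
  inner_signedPerm_self _ (fun _ => boolSign_mul_self _) p

theorem inner_xorSignedPerm_eq_zero {v w : Fin (2 ^ n) × Fin (2 ^ n)}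
    (h : bitDot n ↑(v.1 ^^^ w.1) ↑(v.2 ^^^ w.2) = true) (p : EuclideanSpace ℝ (Fin (2 ^ n))) :
    ⟪xorSignedPerm v p, xorSignedPerm w p⟫ = 0 := by
  refine inner_signedPerm_eq_zero (Equiv.xor (v.1 ^^^ w.1)) (fun x => ?_) (fun x => ?_)
    (fun x => ?_) p
  · simp only [Equiv.xor_apply, xor_assoc, xor_cancel_left]
  · simp only [Equiv.xor_apply]
    rw [xor_comm v.1 w.1, xor_assoc, xor_cancel_left]
  · have hu : boolSign (bitDot n ↑(v.1 ^^^ w.1) v.2) * boolSign (bitDot n ↑(v.1 ^^^ w.1) w.2)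
        = -1 := by
      rw [← boolSign_xor, ← bitDot_xor_right, ← Fin.xor_val_of_two_pow, h, boolSign, if_pos rfl]
    simp only [Equiv.xor_apply]
    rw [Fin.xor_val_of_two_pow, bitDot_xor_left, bitDot_xor_left, boolSign_xor, boolSign_xor]
    linear_combination (boolSign (bitDot n x v.2) * boolSign (bitDot n x w.2)) * hu

theorem inner_xorSignedPerm_self_eq_zero {v : Fin (2 ^ n) × Fin (2 ^ n)}
    (h : bitDot n v.1 v.2 = true) (p : EuclideanSpace ℝ (Fin (2 ^ n))) :
    ⟪xorSignedPerm v p, p⟫ = 0 := by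
  simpa using inner_xorSignedPerm_eq_zero (w := 0) (by simpa using h) p

end BinaryModel

def hurwitzRadonMasks : Fin 17 → Fin (2 ^ 9) × Fin (2 ^ 9) :=
  ![(317, 113), (97, 170), (473, 90), (505, 380), (435, 297), (467, 9), (42, 471), (304, 28),
    (418, 230), (446, 15), (246, 317), (408, 312), (274, 347), (361, 411), (506, 109), (330, 78),
    (117, 327)]

theorem bitDot_hurwitzRadonMasks (i : Fin 17) :
    bitDot 9 (hurwitzRadonMasks i).1 (hurwitzRadonMasks i).2 = true := by
  revert i; decide

theorem bitDot_hurwitzRadonMasks_xor {i j : Fin 17} (hij : i ≠ j) :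
    bitDot 9 ↑((hurwitzRadonMasks i).1 ^^^ (hurwitzRadonMasks j).1)
      ↑((hurwitzRadonMasks i).2 ^^^ (hurwitzRadonMasks j).2) = true := by
  revert i j; decide

/-- There exist 17 pointwise orthonormal tangent vector fields on the
sphere `S^511`: continuous maps `V i` from the unit sphere of `EuclideanSpace ℝ (Fin 512)`
to `EuclideanSpace ℝ (Fin 512)` with `⟪V i p, p⟫ = 0` and `⟪V i p, V j p⟫ = δᵢⱼ`
at every point `p` of the sphere. -/
theorem exists_seventeen_orthonormal_tangent_fields_on_S511 :
    ∃ V : Fin 17 →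
        (Metric.sphere (0 : EuclideanSpace ℝ (Fin 512)) 1 → EuclideanSpace ℝ (Fin 512)),
      (∀ i, Continuous (V i)) ∧
      (∀ i, ∀ p : Metric.sphere (0 : EuclideanSpace ℝ (Fin 512)) 1,
        ⟪V i p, (p : EuclideanSpace ℝ (Fin 512))⟫ = 0) ∧
      (∀ i j, ∀ p : Metric.sphere (0 : EuclideanSpace ℝ (Fin 512)) 1,
        ⟪V i p, V j p⟫ = if i = j then 1 else 0) := by
  refine ⟨fun i p => xorSignedPerm (hurwitzRadonMasks i) p, fun i => ?_, fun i p => ?_,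
    fun i j p => ?_⟩
  · exact (xorSignedPerm _).continuous_of_finiteDimensional.comp continuous_subtype_val
  · exact inner_xorSignedPerm_self_eq_zero (bitDot_hurwitzRadonMasks i) p
  · split_ifs with hij
    · subst hij
      rw [inner_xorSignedPerm_self, real_inner_self_eq_norm_sq, norm_eq_of_mem_sphere p]
      norm_num
    · exact inner_xorSignedPerm_eq_zero (bitDot_hurwitzRadonMasks_xor hij) p
end
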